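/- arXiv:2005.02461 — 9 statements merged into one kernel-verified Lean document; each statement's English description precedes it below -/
import Mathlib

section
/- Let F be a property of groups such that: (i) every group with property F is finite and nilpotent; (ii) if G has property F and f : G → H is a surjective group homomorphism, then H has property F; (iii) if G₁, …, G_n all have property F and D is a subgroup of the product G₁ × ⋯ × G_n such that every coordinate projection D → G_i is surjective, then D has property F. Then F is closed under subgroups: if A has property F and B is a subgroup of A, then B has property F. -/
/-!
Let `A` have nilpotency class `c` and `B ≤ A`. Take the free group on letters `x_b` (`b ∈ B`)
and `y_{α,a}` (`α ≤ c`, `a ∈ A`), and map it to the product of copies of `A` indexed by all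
generating assignments of the letters. The image `D` is a subdirect power of `A`, and evaluation
at `x_b ↦ b`, `y ↦ 1` factors through a surjection `D → B`, as soon as every word `θ` vanishing at
all generating assignments also vanishes at `(b, 1)`.

For this, let `δ_α` delete the block `y_{α,·}` and let `κ = Δ_c ⋯ Δ_0 θ`, where
`Δ_α z = δ_α(z)⁻¹ z`; then `κ` is killed by every `δ_α`. Modulo `γ_{j+2}`, the central section
`γ_{j+1}` is spanned by commutators of weight `j + 1` in the letters; for `j < c` each of these
misses some block, so it is fixed by some `δ_α`, hence killed by the (there multiplicative)
composite of the `Δ_α`, which fixes `κ`. Thus `κ ∈ γ_{c+1}`, so `κ` evaluates to `1` in `A`.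
Evaluating instead at `y_{α,a} ↦ a`, deleting any proper set of blocks still leaves a generating
assignment, and inclusion–exclusion turns `κ` into `θ(b, 1)^{±1}`.
-/

open Subgroup
open scoped commutatorElement

namespace Subgroup

variable {G : Type*} [Group G]

theorem commutatorElement_mem_of_mem_closure_right {N : Subgroup G} [hN : N.Normal] {T : Set G}
    {a : G} (h : ∀ t ∈ T, ⁅a, t⁆ ∈ N) {b : G} (hb : b ∈ closure T) : ⁅a, b⁆ ∈ N := by
  induction hb using closure_induction with
  | mem t ht => exact h t ht
  | one => simp
  | mul b c _ _ hb hc =>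
    rw [commutatorElement_mul_right_eq_mul_conj, mul_assoc, mul_assoc]
    exact N.mul_mem hb (by simpa [mul_assoc] using hN.conj_mem _ hc b)
  | inv b _ hb =>
    rw [commutatorElement_inv_right, ← commutatorElement_inv]
    simpa using hN.conj_mem _ (N.inv_mem hb) b⁻¹

theorem commutator_closure_le {N : Subgroup G} [N.Normal] {S T : Set G}
    (h : ∀ s ∈ S, ∀ t ∈ T, ⁅s, t⁆ ∈ N) : ⁅closure S, closure T⁆ ≤ N := by
  rw [commutator_le]
  intro a ha b hb
  refine commutatorElement_mem_of_mem_closure_right (fun t ht => ?_) hb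
  rw [← inv_mem_iff, commutatorElement_inv]
  exact commutatorElement_mem_of_mem_closure_right (fun s hs => by
    rw [← inv_mem_iff, commutatorElement_inv]; exact h s hs t ht) ha

theorem normal_of_lowerCentralSeries_succ_le {n : ℕ} {H : Subgroup G}
    (h₁ : (⊤ : Subgroup G).lowerCentralSeries (n + 1) ≤ H)
    (h₂ : H ≤ (⊤ : Subgroup G).lowerCentralSeries n) : H.Normal where
  conj_mem u hu g := by
    rw [← MulAut.conj_apply, conj_eq_commutatorElement_mul]
    refine H.mul_mem (h₁ ?_) hu
    rw [← inv_mem_iff, commutatorElement_inv]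
    exact commutator_mem_commutator (h₂ hu) (mem_top g)

theorem map_lowerCentralSeries_top_le {H : Type*} [Group H] (f : G →* H) (n : ℕ) :
    ((⊤ : Subgroup G).lowerCentralSeries n).map f ≤ (⊤ : Subgroup H).lowerCentralSeries n := by
  rw [Subgroup.map_lowerCentralSeries]
  exact Subgroup.lowerCentralSeries_mono n le_top

theorem map_lowerCentralSeries_top_of_surjective {H : Type*} [Group H] {f : G →* H}
    (hf : Function.Surjective f) (n : ℕ) :
    ((⊤ : Subgroup G).lowerCentralSeries n).map f = (⊤ : Subgroup H).lowerCentralSeries n := by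
  rw [Subgroup.map_lowerCentralSeries, map_top_of_surjective f hf]

end Subgroup

section LeftCommutators

variable {G : Type*} [Group G]

def leftCommutators (S : Set G) : ℕ → Set G
  | 0 => S
  | n + 1 => Set.image2 (fun u s => ⁅u, s⁆) (leftCommutators S n) S

theorem leftCommutators_subset_lowerCentralSeries (S : Set G) (n : ℕ) :
    leftCommutators S n ⊆ (⊤ : Subgroup G).lowerCentralSeries n := by
  induction n with
  | zero => exact fun _ _ => mem_top _
  | succ n ih =>
    rintro _ ⟨u, hu, s, -, rfl⟩
    exact commutator_mem_commutator (ih hu) (mem_top s)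

theorem lowerCentralSeries_le_closure_leftCommutators_sup {S : Set G} (hS : closure S = ⊤)
    (n : ℕ) : (⊤ : Subgroup G).lowerCentralSeries n ≤
      closure (leftCommutators S n) ⊔ (⊤ : Subgroup G).lowerCentralSeries (n + 1) := by
  induction n with
  | zero => simp [leftCommutators, hS]
  | succ n ih =>
    have : (closure (leftCommutators S (n + 1)) ⊔
        (⊤ : Subgroup G).lowerCentralSeries (n + 2)).Normal :=
      normal_of_lowerCentralSeries_succ_le le_sup_right <| sup_le
        ((closure_le _).2 (leftCommutators_subset_lowerCentralSeries S _))
        (Subgroup.lowerCentralSeries_antitone _ (Nat.le_succ _))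
    calc (⊤ : Subgroup G).lowerCentralSeries (n + 1)
        ≤ ⁅closure (leftCommutators S n ∪ (⊤ : Subgroup G).lowerCentralSeries (n + 1)),
            closure S⁆ := by
          rw [Subgroup.lowerCentralSeries_succ, Subgroup.closure_union, closure_eq, hS]
          exact commutator_mono ih le_rfl
      _ ≤ _ := by
        refine commutator_closure_le fun u hu s hs => ?_
        rcases hu with hu | hu
        · exact mem_sup_left (subset_closure ⟨u, hu, s, hs, rfl⟩)
        · exact mem_sup_right (commutator_mem_commutator hu (mem_top s))

end LeftCommutators

section IterDiff

variable {ι G : Type*} [Group G] (d : ι → G →* G)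

def iterDiff (L : List ι) (z : G) : G :=
  L.foldr (fun α y => (d α y)⁻¹ * y) z

@[simp]
theorem iterDiff_nil (z : G) : iterDiff d [] z = z := rfl

@[simp]
theorem iterDiff_cons (α : ι) (L : List ι) (z : G) :
    iterDiff d (α :: L) z = (d α (iterDiff d L z))⁻¹ * iterDiff d L z := rfl

variable {d}

theorem map_iterDiff {α : ι} {L : List ι} (h : ∀ β ∈ L, (d α).comp (d β) = (d β).comp (d α))
    (z : G) :
    d α (iterDiff d L z) = iterDiff d L (d α z) := by
  induction L with
  | nil => rfl
  | cons β L ih =>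
    have hαβ (y : G) : d α (d β y) = d β (d α y) := DFunLike.congr_fun (h β List.mem_cons_self) y
    simp only [iterDiff_cons, map_mul, map_inv, hαβ, ih fun γ hγ => h γ (List.mem_cons_of_mem β hγ)]

theorem iterDiff_eq_one_of_map_eq (hd : ∀ α β, (d α).comp (d β) = (d β).comp (d α)) {α : ι}
    {L : List ι} (hα : α ∈ L) {z : G} (hz : d α z = z) : iterDiff d L z = 1 := by
  induction L with
  | nil => cases hα
  | cons β L ih =>
    rcases List.mem_cons.1 hα with rfl | hα
    · rw [iterDiff_cons, map_iterDiff fun γ _ => hd α γ, hz, inv_mul_cancel]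
    · rw [iterDiff_cons, ih hα, map_one, inv_one, one_mul]

theorem iterDiff_eq_self {L : List ι} {z : G} (hz : ∀ α, d α z = 1) : iterDiff d L z = z := by
  induction L with
  | nil => rfl
  | cons β L ih => rw [iterDiff_cons, ih, hz, inv_one, one_mul]

theorem map_iterDiff_eq_one (hd : ∀ α β, (d α).comp (d β) = (d β).comp (d α)) {β : ι}
    (hβ : (d β).comp (d β) = d β) {L : List ι} (hβL : β ∈ L) (z : G) :
    d β (iterDiff d L z) = 1 :=
  (map_iterDiff (fun γ _ => hd β γ) z).trans <|
    iterDiff_eq_one_of_map_eq hd hβL (DFunLike.congr_fun hβ z)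

section Central

variable {V : Subgroup G} (hV : V ≤ center G) (hVd : ∀ α, ∀ a ∈ V, d α a ∈ V)
include hVd

theorem iterDiff_mem (L : List ι) {a : G} (ha : a ∈ V) : iterDiff d L a ∈ V := by
  induction L with
  | nil => exact ha
  | cons β L ih => exact V.mul_mem (V.inv_mem (hVd β _ ih)) ih

include hV

theorem iterDiff_mul (L : List ι) (a : G) {b : G} (hb : b ∈ V) :
    iterDiff d L (a * b) = iterDiff d L a * iterDiff d L b := by
  induction L with
  | nil => rfl
  | cons β L ih =>
    rw [iterDiff_cons, iterDiff_cons, iterDiff_cons, ih]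
    set x := iterDiff d L a
    set y := iterDiff d L b
    have hcen : (d β y)⁻¹ ∈ center G := hV (V.inv_mem (hVd β _ (iterDiff_mem hVd L hb)))
    calc (d β (x * y))⁻¹ * (x * y) = (d β y)⁻¹ * ((d β x)⁻¹ * x) * y := by rw [map_mul]; group
      _ = (d β x)⁻¹ * x * ((d β y)⁻¹ * y) := by rw [← mem_center_iff.1 hcen]; group

end Central

end IterDiff

section Multilinear

variable {ι G : Type*} [Group G] {d : ι → G →* G}

theorem ncard_moved_leftCommutators_le [Finite ι] {S : Set G}
    (hS : ∀ s ∈ S, {α | d α s ≠ s}.Subsingleton) {n : ℕ} {u : G}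
    (hu : u ∈ leftCommutators S n) : {α | d α u ≠ u}.ncard ≤ n + 1 := by
  induction n generalizing u with
  | zero => exact Set.ncard_le_one_iff_subsingleton.2 (hS u hu)
  | succ n ih =>
    obtain ⟨v, hv, s, hs, rfl⟩ := hu
    calc {α | d α ⁅v, s⁆ ≠ ⁅v, s⁆}.ncard ≤ ({α | d α v ≠ v} ∪ {α | d α s ≠ s}).ncard := by
          refine Set.ncard_le_ncard (fun α hα => ?_)
          by_contra h
          simp only [Set.mem_union, Set.mem_ofPred_eq, not_or, not_not] at h
          exact hα (by rw [map_commutatorElement, h.1, h.2])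
      _ ≤ n + 1 + 1 := (Set.ncard_union_le _ _).trans
          (add_le_add (ih hv) (Set.ncard_le_one_iff_subsingleton.2 (hS s hs)))

theorem exists_map_eq_of_mem_leftCommutators [Fintype ι] {S : Set G}
    (hS : ∀ s ∈ S, {α | d α s ≠ s}.Subsingleton) {j : ℕ} (hj : j + 1 < Fintype.card ι) {u : G}
    (hu : u ∈ leftCommutators S j) : ∃ α, d α u = u := by
  by_contra! h
  have := ncard_moved_leftCommutators_le hS hu
  rw [Set.eq_univ_of_forall (s := {α | d α u ≠ u}) h, Set.ncard_univ,
    Nat.card_eq_fintype_card] at this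
  omega

theorem eq_one_of_mem_lowerCentralSeries [Fintype ι]
    (hd : ∀ α β, (d α).comp (d β) = (d β).comp (d α))
    {S : Set G} (hS : closure S = ⊤) (hSd : ∀ s ∈ S, {α | d α s ≠ s}.Subsingleton)
    {j : ℕ} (hj : j + 1 < Fintype.card ι)
    (hG : (⊤ : Subgroup G).lowerCentralSeries (j + 1) = ⊥)
    {x : G} (hxj : x ∈ (⊤ : Subgroup G).lowerCentralSeries j) (hx : ∀ α, d α x = 1) : x = 1 := by
  set V := (⊤ : Subgroup G).lowerCentralSeries j
  have hV : V ≤ center G := by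
    rw [← commutator_top_right_eq_bot_iff_le_center]; exact hG
  have hVd (α : ι) : ∀ a ∈ V, d α a ∈ V := fun a ha =>
    map_lowerCentralSeries_top_le (d α) j (mem_map_of_mem (d α) ha)
  have hxS : x ∈ closure (leftCommutators S j) := by
    have := lowerCentralSeries_le_closure_leftCommutators_sup hS j hxj
    rwa [hG, sup_bot_eq] at this
  have hSV : closure (leftCommutators S j) ≤ V :=
    (closure_le V).2 (leftCommutators_subset_lowerCentralSeries S j)
  set L := (Finset.univ : Finset ι).toList
  have hkill : ∀ y ∈ closure (leftCommutators S j), iterDiff d L y = 1 := by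
    intro y hy
    induction hy using closure_induction with
    | mem u hu =>
      obtain ⟨α, hα⟩ := exists_map_eq_of_mem_leftCommutators hSd hj hu
      exact iterDiff_eq_one_of_map_eq hd (by simp [L]) hα
    | one => exact iterDiff_eq_self fun α => map_one (d α)
    | mul y z _ hz hy1 hz1 => rw [iterDiff_mul hV hVd L y (hSV hz), hy1, hz1, one_mul]
    | inv y hy hy1 =>
      calc iterDiff d L y⁻¹ = iterDiff d L y⁻¹ * iterDiff d L y := by rw [hy1, mul_one]
        _ = iterDiff d L (y⁻¹ * y) := (iterDiff_mul hV hVd L _ (hSV hy)).symm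
        _ = 1 := by rw [inv_mul_cancel]; exact iterDiff_eq_self fun α => map_one (d α)
  rw [← iterDiff_eq_self (L := L) hx]
  exact hkill x hxS

theorem mem_lowerCentralSeries_of_forall_map_eq_one [Fintype ι]
    (hd : ∀ α β, (d α).comp (d β) = (d β).comp (d α)) {S : Set G} (hS : closure S = ⊤)
    (hSd : ∀ s ∈ S, {α | d α s ≠ s}.Subsingleton) {x : G} (hx : ∀ α, d α x = 1) {j : ℕ}
    (hj : j < Fintype.card ι) : x ∈ (⊤ : Subgroup G).lowerCentralSeries j := by
  induction j with
  | zero => exact mem_top x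
  | succ j ih =>
    set N := (⊤ : Subgroup G).lowerCentralSeries (j + 1)
    set π := QuotientGroup.mk' N
    have hπ : Function.Surjective π := QuotientGroup.mk'_surjective N
    have hN (α : ι) : N ≤ N.comap (d α) := fun a ha =>
      map_lowerCentralSeries_top_le (d α) _ (mem_map_of_mem (d α) ha)
    let e (α : ι) : G ⧸ N →* G ⧸ N := QuotientGroup.map N N (d α) (hN α)
    have he (α : ι) (a : G) : e α (π a) = π (d α a) := rfl
    have hecomm (α β : ι) : (e α).comp (e β) = (e β).comp (e α) :=
      QuotientGroup.monoidHom_ext N <| MonoidHom.ext fun a =>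
        congrArg π (DFunLike.congr_fun (hd α β) a)
    suffices π x = 1 from (QuotientGroup.eq_one_iff x).1 this
    refine eq_one_of_mem_lowerCentralSeries hecomm (S := π '' S) ?_ ?_ hj ?_ ?_ ?_
    · rw [← MonoidHom.map_closure, hS, map_top_of_surjective π hπ]
    · rintro _ ⟨s, hs, rfl⟩
      refine (hSd s hs).anti fun α hα hfix => hα ?_
      rw [he, hfix]
    · rw [← map_lowerCentralSeries_top_of_surjective hπ, Subgroup.map_eq_bot_iff,
        QuotientGroup.ker_mk']
    · rw [← map_lowerCentralSeries_top_of_surjective hπ]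
      exact mem_map_of_mem π (ih (by omega))
    · intro α
      rw [he, hx, map_one]

end Multilinear

section InclusionExclusion

variable {ι G H : Type*} [Group G] [Group H] {δ : Set ι → G →* G}

theorem map_iterDiff_eq_one_iff (hδ : ∀ E F, (δ E).comp (δ F) = δ (E ∪ F)) (φ : G →* H) {z : G}
    (hz : ∀ E ≠ Set.univ, φ (δ E z) = 1) {L : List ι} (hL : L.Nodup) {E : Set ι}
    (hE : ∀ α ∈ L, α ∉ E) :
    φ (δ E (iterDiff (fun α => δ {α}) L z)) = 1 ↔
      (E ∪ {α | α ∈ L} = Set.univ → φ (δ Set.univ z) = 1) := by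
  induction L generalizing E with
  | nil =>
    by_cases hEu : E = Set.univ
    · simp [hEu]
    · simp [hz E hEu, hEu]
  | cons α L ih =>
    obtain ⟨hαL, hL⟩ := List.nodup_cons.1 hL
    set y := iterDiff (fun α => δ {α}) L z
    have hδα : δ E (δ {α} y) = δ (E ∪ {α}) y := DFunLike.congr_fun (hδ E {α}) y
    have hy : φ (δ E y) = 1 := by
      refine (ih hL fun β hβ => hE β (List.mem_cons_of_mem α hβ)).2 fun hcover => ?_
      have := hcover ▸ Set.mem_univ α
      exact (this.elim (hE α List.mem_cons_self) hαL).elim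
    have hα := ih hL (E := E ∪ {α}) fun β hβ hβE => hβE.elim (hE β (List.mem_cons_of_mem α hβ))
      fun h => hαL (Set.mem_singleton_iff.1 h ▸ hβ)
    rw [iterDiff_cons, map_mul, map_inv, map_mul, map_inv, hδα, hy, mul_one, inv_eq_one, hα]
    have hcover : E ∪ {α} ∪ {β | β ∈ L} = E ∪ {β | β ∈ α :: L} := by
      ext β; simp [or_assoc, or_left_comm]
    rw [hcover]

end InclusionExclusion

section DeleteBlocks

variable {X ι Y A : Type*} [Group A]

noncomputable def deleteBlocks (E : Set ι) : FreeGroup (X ⊕ ι × Y) →* FreeGroup (X ⊕ ι × Y) :=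
  FreeGroup.lift <| Sum.elim (fun x => .of (.inl x)) <|
    (Prod.fst ⁻¹' E)ᶜ.mulIndicator fun p => .of (.inr p)

variable {E : Set ι}

@[simp]
theorem deleteBlocks_of_inl (x : X) :
    deleteBlocks (Y := Y) E (.of (.inl x)) = .of (.inl x) := by
  simp [deleteBlocks]

@[simp]
theorem deleteBlocks_of_inr_of_mem {p : ι × Y} (hp : p.1 ∈ E) :
    deleteBlocks (X := X) E (.of (.inr p)) = 1 := by
  simp [deleteBlocks, hp]

@[simp]
theorem deleteBlocks_of_inr_of_notMem {p : ι × Y} (hp : p.1 ∉ E) :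
    deleteBlocks (X := X) E (.of (.inr p)) = .of (.inr p) := by
  simp [deleteBlocks, hp]

theorem deleteBlocks_comp (E F : Set ι) :
    (deleteBlocks (X := X) (Y := Y) E).comp (deleteBlocks F) = deleteBlocks (E ∪ F) := by
  refine FreeGroup.ext_hom _ _ fun a => ?_
  rcases a with x | p
  · simp
  · by_cases hE : p.1 ∈ E <;> by_cases hF : p.1 ∈ F <;> simp [hE, hF]

theorem deleteBlocks_empty : deleteBlocks (X := X) (Y := Y) (∅ : Set ι) = MonoidHom.id _ := by
  refine FreeGroup.ext_hom _ _ fun a => ?_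
  rcases a with x | p <;> simp

theorem lift_comp_deleteBlocks (w : X → A) (h : ι × Y → A) :
    (FreeGroup.lift (Sum.elim w h)).comp (deleteBlocks E) =
      FreeGroup.lift (Sum.elim w ((Prod.fst ⁻¹' E)ᶜ.mulIndicator h)) := by
  refine FreeGroup.ext_hom _ _ fun a => ?_
  rcases a with x | p
  · simp
  · by_cases hp : p.1 ∈ E <;> simp [hp]

end DeleteBlocks

section RelativelyFree

variable {X ι Y A : Type*} [Group A]

theorem closure_range_sumElim_mulIndicator_eq_top (w : X → A) {g : Y → A}
    (hg : closure (Set.range g) = ⊤) {E : Set ι} (hE : E ≠ Set.univ) :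
    closure (Set.range (Sum.elim w ((Prod.fst ⁻¹' E)ᶜ.mulIndicator (g ∘ Prod.snd)))) =
      ⊤ := by
  obtain ⟨α, hα⟩ := (Set.ne_univ_iff_exists_notMem E).1 hE
  refine top_unique (hg ▸ closure_mono ?_)
  rintro _ ⟨y, rfl⟩
  exact ⟨.inr (α, y), Set.mulIndicator_of_mem (show (α, y) ∈ (Prod.fst ⁻¹' E)ᶜ from hα) _⟩

theorem lift_sumElim_one_eq_one_of_generating [Fintype ι] {c : ℕ}
    (hA : (⊤ : Subgroup A).lowerCentralSeries c = ⊥) (hc : c < Fintype.card ι) {g : Y → A}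
    (hg : closure (Set.range g) = ⊤) (w : X → A) {θ : FreeGroup (X ⊕ ι × Y)}
    (hθ : ∀ u : X ⊕ ι × Y → A, closure (Set.range u) = ⊤ → FreeGroup.lift u θ = 1) :
    FreeGroup.lift (Sum.elim w 1) θ = 1 := by
  set δ : Set ι → FreeGroup (X ⊕ ι × Y) →* FreeGroup (X ⊕ ι × Y) := deleteBlocks
  set φ := FreeGroup.lift (Sum.elim w (g ∘ Prod.snd))
  have hφδ (E : Set ι) (z) : φ (δ E z) = FreeGroup.lift
      (Sum.elim w ((Prod.fst ⁻¹' E)ᶜ.mulIndicator (g ∘ Prod.snd))) z :=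
    DFunLike.congr_fun (lift_comp_deleteBlocks w _) z
  have hcomm (α β : ι) : (δ {α}).comp (δ {β}) = (δ {β}).comp (δ {α}) := by
    simp only [δ, deleteBlocks_comp, Set.union_comm]
  set κ := iterDiff (fun α => δ {α}) (Finset.univ : Finset ι).toList θ
  have hκ : κ ∈ (⊤ : Subgroup _).lowerCentralSeries c := by
    refine mem_lowerCentralSeries_of_forall_map_eq_one hcomm (FreeGroup.closure_range_of _)
      ?_ (fun α => map_iterDiff_eq_one hcomm (by simp [δ, deleteBlocks_comp]) (by simp) θ) hc
    rintro _ ⟨x | p, rfl⟩ α hα β hβ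
    · exact (hα (deleteBlocks_of_inl x)).elim
    · have hmoved {γ : ι} (hγ : δ {γ} (.of (.inr p)) ≠ .of (.inr p)) : γ = p.1 := by
        by_contra h
        exact hγ (deleteBlocks_of_inr_of_notMem (Ne.symm h))
      rw [hmoved hα, hmoved hβ]
  have hφκ : φ κ = 1 := by
    simpa [hA] using map_lowerCentralSeries_top_le φ c (mem_map_of_mem φ hκ)
  have key := map_iterDiff_eq_one_iff deleteBlocks_comp φ
    (fun E hE => (hφδ E θ).trans (hθ _ (closure_range_sumElim_mulIndicator_eq_top w hg hE)))
    (Finset.nodup_toList Finset.univ) (E := ∅) (by simp)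
  rw [deleteBlocks_empty, MonoidHom.id_apply] at key
  calc FreeGroup.lift (Sum.elim w 1) θ = φ (δ Set.univ θ) := by
        rw [hφδ, Set.preimage_univ, Set.compl_univ, Set.mulIndicator_empty]; rfl
    _ = 1 := key.1 hφκ (by ext; simp)

end RelativelyFree

theorem MonoidHom.exists_surjective_range_of_ker_le {G H K : Type*} [Group G] [Group H] [Group K]
    (f : G →* H) (g : G →* K) (h : f.ker ≤ g.ker) :
    ∃ φ : f.range →* g.range, Function.Surjective φ := by
  have h' : f.ker ≤ g.rangeRestrict.ker := by rwa [MonoidHom.ker_rangeRestrict]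
  exact ⟨(QuotientGroup.lift f.ker g.rangeRestrict h').comp
      (QuotientGroup.quotientKerEquivRange f).symm.toMonoidHom,
    (QuotientGroup.lift_surjective_of_surjective _ _ g.rangeRestrict_surjective h').comp
      (QuotientGroup.quotientKerEquivRange f).symm.surjective⟩

theorem Subgroup.exists_surjective_of_subdirect_power {A : Type*} [Group A] [Finite A]
    [Group.IsNilpotent A] (B : Subgroup A) :
    ∃ (n : ℕ) (D : Subgroup (Fin n → A)) (f : D →* B),
      0 < n ∧ (∀ i a, ∃ d ∈ D, d i = a) ∧ Function.Surjective f := by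
  set W := B ⊕ Fin (Group.nilpotencyClass A + 1) × A
  set Gen := {u : W → A // closure (Set.range u) = ⊤}
  have : Nonempty Gen :=
    ⟨⟨Sum.elim Subtype.val Prod.snd, top_unique fun a _ => subset_closure ⟨.inr (0, a), rfl⟩⟩⟩
  set e := Finite.equivFin Gen
  set ev : FreeGroup W →* (Fin (Nat.card Gen) → A) :=
    MonoidHom.pi fun i => FreeGroup.lift (e.symm i).1
  set v : W → A := Sum.elim Subtype.val 1
  have hv : (FreeGroup.lift v).range = B := by
    rw [FreeGroup.range_lift_eq_closure]
    refine le_antisymm ((closure_le B).2 ?_) fun b hb => subset_closure ⟨.inl ⟨b, hb⟩, rfl⟩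
    rintro _ ⟨b | p, rfl⟩
    · exact b.2
    · exact B.one_mem
  obtain ⟨φ, hφ⟩ := ev.exists_surjective_range_of_ker_le (FreeGroup.lift v) fun θ hθ =>
    lift_sumElim_one_eq_one_of_generating Subgroup.lowerCentralSeries_nilpotencyClass (by simp)
      (g := id) (by simp) Subtype.val fun u hu => by
        simpa [ev] using congrFun hθ (e ⟨u, hu⟩)
  refine ⟨_, ev.range, (MulEquiv.subgroupCongr hv).toMonoidHom.comp φ, Nat.card_pos, ?_,
    (MulEquiv.subgroupCongr hv).surjective.comp hφ⟩
  intro i a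
  obtain ⟨θ, hθ⟩ : a ∈ (FreeGroup.lift (e.symm i).1).range := by
    rw [FreeGroup.range_lift_eq_closure, (e.symm i).2]; exact mem_top a
  exact ⟨ev θ, ⟨θ, rfl⟩, by simpa [ev] using hθ⟩

/-- A formation of finite nilpotent groups is closed under subgroups.
`F` is a property of groups such that (i) every group with property `F` is finite and nilpotent,
(ii) `F` is preserved by surjective homomorphic images, and (iii) `F` is preserved by finite
subdirect products. Then `F` is closed under subgroups. -/
theorem formation_of_finite_nilpotent_groups_is_hereditary
    (F : (G : Type u) → [inst : Group G] → Prop)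
    (hfin : ∀ (G : Type u) [Group G], F G → Finite G ∧ Group.IsNilpotent G)
    (hquot : ∀ (G H : Type u) [Group G] [Group H] (f : G →* H),
      Function.Surjective f → F G → F H)
    (hsub : ∀ (n : ℕ), 0 < n → ∀ (G : Fin n → Type u) [∀ i, Group (G i)],
      (∀ i, F (G i)) → ∀ D : Subgroup (∀ i, G i),
        (∀ (i : Fin n) (a : G i), ∃ d ∈ D, d i = a) → F D)
    (A : Type u) [Group A] (hAF : F A) (B : Subgroup A) :
    F B := by
  obtain ⟨_, _⟩ := hfin A hAF
  obtain ⟨n, D, f, hn, hD, hf⟩ := Subgroup.exists_surjective_of_subdirect_power B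
  exact hquot D B f hf (hsub n hn (fun _ => A) (fun _ => hAF) D hD)
end

section
/- Let X be a finite nilpotent group, let m be a positive integer, let B be a subgroup of X^m, and let Y be a group that is a surjective homomorphic image of B. Then Y is a homomorphic image of a finite subdirect power of X: there exist a positive integer n, a subgroup D of X^n such that every coordinate projection D → X is surjective, and a surjective group homomorphism D → Y. -/
/-!
Let `c` be the nilpotency class of `X` and `α := (Fin (c + 1) × X) ⊕ B`. The free group on `α`
maps onto `B`, hence onto `Y`, and by evaluation into `X ^ I`, where `I` is the set of tuples
`α → X` generating `X`; its image `D` is subdirect because every coordinate is evaluation at a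
generating tuple. So it suffices that a word vanishing on all generating `α`-tuples is a law of
`X`: it then vanishes on `B ≤ X ^ m`, and `Y` is a quotient of `D`.

This goes by downward induction on the subgroup `H` generated by a tuple `z`. If `H ≠ X`, pick
`g ∉ H` and, as `|α| > (c + 1) |X|`, slots `a₀, a₁, …, a_{c+1}` on which `z` is constant.
Multiplying the entries of `z` at a nonempty set of the `a_i`, `i ≥ 1`, by `g` gives a tuple
generating a larger subgroup (it contains `z a₀` and `z a₀ * g`), on which `w` vanishes. The
`(c + 1)`-fold finite difference of `w` in these directions is a free-group word that dies when
any one of its `c + 1` auxiliary letters is deleted, so it lies in the `(c + 1)`-st term of the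
lower central series and vanishes in `X`; but its value at `z` is `w(z)` or `w(z)⁻¹`.
-/

open scoped commutatorElement

namespace Subgroup

variable {G : Type*} [Group G]

theorem mem_upperCentralSeriesStep_of_closure_eq_top {N : Subgroup G} [hN : N.Normal]
    {S : Set G} (hS : Subgroup.closure S = ⊤) {x : G} (hx : ∀ s ∈ S, ⁅x, s⁆ ∈ N) :
    x ∈ N.upperCentralSeriesStep := by
  intro y
  have hy : y ∈ Subgroup.closure S := hS ▸ Subgroup.mem_top y
  induction hy using Subgroup.closure_induction with
  | mem s hs => exact hx s hs
  | one => simp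
  | mul a b _ _ ha hb =>
    rw [commutatorElement_mul_right_eq_mul_conj, mul_assoc _ a, mul_assoc]
    exact mul_mem ha (hN.conj_mem _ hb a)
  | inv a _ ha =>
    rw [commutatorElement_inv_right, ← commutatorElement_inv]
    simpa using hN.conj_mem _ (inv_mem ha) a⁻¹

theorem mul_inv_map_mem_closure_setOf_map_eq_one {S : Set G} (hS : S ⊆ Subgroup.center G)
    (r : G →* G) (hr : ∀ c ∈ S, r c = c ∨ r c = 1) {y : G} (hy : y ∈ Subgroup.closure S) :
    y * (r y)⁻¹ ∈ Subgroup.closure {c ∈ S | r c = 1} := by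
  have hcen : Subgroup.closure S ≤ Subgroup.center G := Subgroup.closure_le _ |>.mpr hS
  have hK : Subgroup.closure {c ∈ S | r c = 1} ≤ Subgroup.center G :=
    (Subgroup.closure_mono fun c (hc : c ∈ {c ∈ S | r c = 1}) => hc.1).trans hcen
  induction hy using Subgroup.closure_induction with
  | mem c hc =>
    rcases hr c hc with h | h
    · simp [h]
    · simpa [h] using Subgroup.subset_closure (show c ∈ {c ∈ S | r c = 1} from ⟨hc, h⟩)
  | one => simp
  | mul a b _ _ ha hb =>
    have hcomm := Subgroup.mem_center_iff.mp (hK hb) (r a)⁻¹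
    have : a * b * (r (a * b))⁻¹ = a * (r a)⁻¹ * (b * (r b)⁻¹) :=
      calc a * b * (r (a * b))⁻¹ = a * (b * (r b)⁻¹ * (r a)⁻¹) := by
            rw [map_mul]; group
        _ = a * (r a)⁻¹ * (b * (r b)⁻¹) := by rw [← hcomm]; group
    exact this ▸ mul_mem ha hb
  | inv a ha' ha =>
    have hcomm := Subgroup.mem_center_iff.mp (hcen (inv_mem ha')) (r a)
    have : a⁻¹ * (r a⁻¹)⁻¹ = (a * (r a)⁻¹)⁻¹ := by simp [hcomm]
    exact this ▸ inv_mem ha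

theorem mem_closure_setOf_forall_map_eq_one {ι : Type*} [DecidableEq ι] {S : Set G}
    (hS : S ⊆ Subgroup.center G) (r : ι → G →* G)
    (hr : ∀ c ∈ S, ∀ i, r i c = c ∨ r i c = 1)
    (J : Finset ι) {x : G} (hx : x ∈ Subgroup.closure S) (hrx : ∀ i ∈ J, r i x = 1) :
    x ∈ Subgroup.closure {c ∈ S | ∀ i ∈ J, r i c = 1} := by
  induction J using Finset.induction_on with
  | empty => simpa using hx
  | insert j J _ ih =>
    rw [Finset.forall_mem_insert] at hrx
    have := mul_inv_map_mem_closure_setOf_map_eq_one (fun c hc => hS hc.1) (r j)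
      (fun c hc => hr c hc.1 j) (ih hrx.2)
    rw [hrx.1, inv_one, mul_one] at this
    refine Subgroup.closure_mono ?_ this
    rintro c ⟨⟨hc, hJ⟩, hj⟩
    exact ⟨hc, Finset.forall_mem_insert _ _ _ |>.mpr ⟨hj, hJ⟩⟩

end Subgroup

theorem Finite.exists_finset_eq_on_of_mul_lt_card {α β : Type*} [Finite α] [Finite β]
    (f : α → β) {n : ℕ} (h : Nat.card β * n < Nat.card α) :
    ∃ a₀, ∃ S : Finset α, a₀ ∉ S ∧ (∀ a ∈ S, f a = f a₀) ∧ n ≤ S.card := by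
  classical
  have := Fintype.ofFinite α
  have := Fintype.ofFinite β
  rw [Nat.card_eq_fintype_card, Nat.card_eq_fintype_card] at h
  obtain ⟨y, hy⟩ := Fintype.exists_lt_card_fiber_of_mul_lt_card f h
  obtain ⟨a₀, ha₀⟩ := Finset.card_pos.mp (n.zero_le.trans_lt hy)
  refine ⟨a₀, (Finset.univ.filter (f · = y)).erase a₀, Finset.notMem_erase a₀ _,
    fun a ha => ?_, ?_⟩
  · exact (Finset.mem_filter.mp (Finset.mem_of_mem_erase ha)).2.trans
      (Finset.mem_filter.mp ha₀).2.symm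
  · rw [Finset.card_erase_of_mem ha₀]
    omega

theorem MonoidHom.exists_surjective_of_ker_le {G H K : Type*} [Group G] [Group H] [Group K]
    {φ : G →* H} (hφ : Function.Surjective φ) {ψ : G →* K} (hψ : Function.Surjective ψ)
    (h : φ.ker ≤ ψ.ker) : ∃ μ : H →* K, Function.Surjective μ :=
  ⟨φ.liftOfSurjective hφ ⟨ψ, h⟩, fun k =>
    let ⟨g, hg⟩ := hψ k
    ⟨φ g, by simpa using hg⟩⟩

namespace FreeGroup

variable {α X : Type*} [Group X]

def iteratedCommutator : α → List α → FreeGroup α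
  | a, [] => of a
  | a, b :: L => ⁅iteratedCommutator b L, of a⁆

theorem iteratedCommutator_mem_lowerCentralSeries (a : α) (L : List α) :
    iteratedCommutator a L ∈ (⊤ : Subgroup (FreeGroup α)).lowerCentralSeries L.length := by
  induction L generalizing a with
  | nil => exact Subgroup.mem_top _
  | cons b L ih => exact Subgroup.commutator_mem_commutator (ih b) (Subgroup.mem_top _)

def iteratedCommutators (k : ℕ) : Set (FreeGroup α) :=
  {x | ∃ a L, L.length = k ∧ iteratedCommutator a L = x}

theorem lowerCentralSeries_le_closure_iteratedCommutators_sup (k : ℕ) :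
    (⊤ : Subgroup (FreeGroup α)).lowerCentralSeries k ≤
      Subgroup.closure (iteratedCommutators k) ⊔
        (⊤ : Subgroup (FreeGroup α)).lowerCentralSeries (k + 1) := by
  induction k with
  | zero =>
    rw [Subgroup.lowerCentralSeries_zero, ← closure_range_of]
    refine le_sup_of_le_left (Subgroup.closure_mono ?_)
    rintro _ ⟨a, rfl⟩
    exact ⟨a, [], rfl, rfl⟩
  | succ k ih =>
    set T := Subgroup.closure (iteratedCommutators (k + 1)) ⊔
      (⊤ : Subgroup (FreeGroup α)).lowerCentralSeries (k + 2)
    have hT : T ≤ (⊤ : Subgroup (FreeGroup α)).lowerCentralSeries (k + 1) := by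
      refine sup_le (Subgroup.closure_le _ |>.mpr ?_)
        (Subgroup.lowerCentralSeries_antitone _ (k + 1).le_succ)
      rintro _ ⟨a, L, hL, rfl⟩
      exact hL ▸ iteratedCommutator_mem_lowerCentralSeries a L
    have : T.Normal :=
      Subgroup.commutator_top_right_le_iff.mp
        ((Subgroup.commutator_mono hT le_rfl).trans le_sup_right)
    have hstep :
        (⊤ : Subgroup (FreeGroup α)).lowerCentralSeries k ≤ T.upperCentralSeriesStep := by
      refine ih.trans (sup_le (Subgroup.closure_le _ |>.mpr ?_) fun x hx y => ?_)
      · rintro _ ⟨a, L, rfl, rfl⟩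
        refine Subgroup.mem_upperCentralSeriesStep_of_closure_eq_top (closure_range_of α) ?_
        rintro _ ⟨b, rfl⟩
        exact le_sup_left (a := Subgroup.closure _)
          (Subgroup.subset_closure ⟨b, a :: L, rfl, rfl⟩)
      · exact le_sup_right (a := Subgroup.closure _)
          (Subgroup.commutator_mem_commutator hx (Subgroup.mem_top y))
    exact Subgroup.commutator_le.mpr fun x hx y _ => hstep hx y

theorem image_iteratedCommutators_subset_center (k : ℕ) :
    QuotientGroup.mk' ((⊤ : Subgroup (FreeGroup α)).lowerCentralSeries (k + 1)) ''
        iteratedCommutators k ⊆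
      Subgroup.center
        (FreeGroup α ⧸ (⊤ : Subgroup (FreeGroup α)).lowerCentralSeries (k + 1)) := by
  rintro _ ⟨_, ⟨a, L, hL, rfl⟩, rfl⟩
  have : iteratedCommutator a L ∈
      ((⊤ : Subgroup (FreeGroup α)).lowerCentralSeries (k + 1)).upperCentralSeriesStep :=
    fun y => Subgroup.commutator_mem_commutator
      (hL ▸ iteratedCommutator_mem_lowerCentralSeries a L) (Subgroup.mem_top y)
  rwa [Subgroup.upperCentralSeriesStep_eq_comap_center] at this

theorem mk_mem_closure_image_iteratedCommutators {k : ℕ} {v : FreeGroup α}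
    (hv : v ∈ (⊤ : Subgroup (FreeGroup α)).lowerCentralSeries k) :
    QuotientGroup.mk' ((⊤ : Subgroup (FreeGroup α)).lowerCentralSeries (k + 1)) v ∈
      Subgroup.closure
        (QuotientGroup.mk' ((⊤ : Subgroup (FreeGroup α)).lowerCentralSeries (k + 1)) ''
          iteratedCommutators k) := by
  refine (sup_le ?_ ?_ : _ ≤ Subgroup.comap (QuotientGroup.mk' _) (Subgroup.closure _))
    (lowerCentralSeries_le_closure_iteratedCommutators_sup k hv)
  · exact Subgroup.closure_le _ |>.mpr fun x hx => Subgroup.subset_closure ⟨x, hx, rfl⟩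
  · intro x hx
    rw [Subgroup.mem_comap, QuotientGroup.mk'_apply, (QuotientGroup.eq_one_iff x).mpr hx]
    exact one_mem _

theorem lift_map_inl (x : α → X) (y : α → X) (w : FreeGroup α) :
    lift (Sum.elim x y) (map Sum.inl w) = lift x w := by
  have : (lift (Sum.elim x y)).comp (map Sum.inl) = lift x := by ext a; simp
  exact DFunLike.congr_fun this w

theorem lift_eq_one_of_forall_lift_eq_one {ι : Type*} {B : Subgroup (ι → X)} {w : FreeGroup α}
    (hw : ∀ z : α → X, lift z w = 1) (y : α → B) : lift y w = 1 := by
  refine Subtype.ext (funext fun κ => ?_)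
  have : ((Pi.evalMonoidHom _ κ).comp B.subtype).comp (lift y) =
      lift fun a => (y a : ι → X) κ := by
    ext a; simp
  simpa using (DFunLike.congr_fun this w).trans (hw _)

section LetterDeletion

variable [DecidableEq α]

def killLetter (z : α) : FreeGroup α →* FreeGroup α :=
  lift (Function.update of z 1)

@[simp]
theorem killLetter_of_self (z : α) : killLetter z (of z) = 1 := by
  simp [killLetter]

theorem killLetter_of_of_ne {z a : α} (h : a ≠ z) : killLetter z (of a) = of a := by
  simp [killLetter, h]

theorem killLetter_iteratedCommutator (z a : α) (L : List α) :
    killLetter z (iteratedCommutator a L) = if z ∈ a :: L then 1 else iteratedCommutator a L := by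
  induction L generalizing a with
  | nil =>
    by_cases h : a = z
    · simp [iteratedCommutator, h]
    · simp [iteratedCommutator, killLetter_of_of_ne h, Ne.symm h]
  | cons b L ih =>
    rw [iteratedCommutator, map_commutatorElement, ih]
    by_cases h : a = z
    · simp [h]
    · simp [killLetter_of_of_ne h, Ne.symm h]
      split_ifs <;> simp

theorem mem_lowerCentralSeries_succ_of_killLetter_eq_one {S : Finset α} {v : FreeGroup α}
    {k : ℕ} (hk : k + 1 < S.card)
    (hvk : v ∈ (⊤ : Subgroup (FreeGroup α)).lowerCentralSeries k)
    (hv : ∀ z ∈ S, killLetter z v = 1) :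
    v ∈ (⊤ : Subgroup (FreeGroup α)).lowerCentralSeries (k + 1) := by
  -- Modulo `N`, the iterated commutators of `k + 1` letters are central and generate the image of
  -- `v`; each `killLetter z` fixes or kills each of them, and as `S` has more than `k + 1`
  -- letters, every one of them is fixed by some `killLetter z` with `z ∈ S`.
  set N := (⊤ : Subgroup (FreeGroup α)).lowerCentralSeries (k + 1)
  let π := QuotientGroup.mk' N
  have hN (z : α) : N ≤ N.comap (killLetter z) := Subgroup.map_le_iff_le_comap.mp <| by
    rw [Subgroup.map_lowerCentralSeries]; exact Subgroup.lowerCentralSeries_mono _ le_top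
  let r (z : α) : FreeGroup α ⧸ N →* FreeGroup α ⧸ N :=
    QuotientGroup.map N N (killLetter z) (hN z)
  have hr (z : α) (x : FreeGroup α) : r z (π x) = π (killLetter z x) := rfl
  have hCr : ∀ c ∈ π '' iteratedCommutators k, ∀ z, r z c = c ∨ r z c = 1 := by
    rintro _ ⟨_, ⟨a, L, -, rfl⟩, rfl⟩ z
    rw [hr, killLetter_iteratedCommutator]
    split_ifs <;> simp
  have hkilled := Subgroup.mem_closure_setOf_forall_map_eq_one
    (image_iteratedCommutators_subset_center k) r hCr S
    (mk_mem_closure_image_iteratedCommutators hvk)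
    (fun z hz => by rw [hr, hv z hz]; exact π.map_one)
  have hC1 : {c ∈ π '' iteratedCommutators k | ∀ z ∈ S, r z c = 1} ⊆ {1} := by
    rintro _ ⟨⟨_, ⟨a, L, hL, rfl⟩, rfl⟩, h⟩
    obtain ⟨z, hzS, hz⟩ := Finset.exists_mem_notMem_of_card_lt_card
      ((List.toFinset_card_le (a :: L)).trans_lt (by simpa [hL] using hk))
    have := h z hzS
    rwa [hr, killLetter_iteratedCommutator, if_neg (by simpa using hz)] at this
  have := Subgroup.closure_mono hC1 hkilled
  rw [Subgroup.closure_singleton_one, Subgroup.mem_bot] at this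
  exact (QuotientGroup.eq_one_iff v).mp this

theorem mem_lowerCentralSeries_of_killLetter_eq_one {S : Finset α} {v : FreeGroup α}
    (hv : ∀ z ∈ S, killLetter z v = 1) {k : ℕ} (hk : k < S.card) :
    v ∈ (⊤ : Subgroup (FreeGroup α)).lowerCentralSeries k := by
  induction k with
  | zero => exact Subgroup.mem_top v
  | succ k ih => exact mem_lowerCentralSeries_succ_of_killLetter_eq_one hk (ih (by omega)) hv

def perturbLetter (a : α) : FreeGroup (α ⊕ α) →* FreeGroup (α ⊕ α) :=
  lift (Function.update of (.inl a) (of (.inl a) * of (.inr a)))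

theorem killLetter_comp_perturbLetter_self (a : α) :
    (killLetter (.inr a)).comp (perturbLetter a) = killLetter (.inr a) := by
  ext x
  rcases x with x | x <;> by_cases h : x = a <;>
    simp [perturbLetter, killLetter, h]

theorem killLetter_comp_perturbLetter_of_ne {a b : α} (h : a ≠ b) :
    (killLetter (.inr b)).comp (perturbLetter a) =
      (perturbLetter a).comp (killLetter (.inr b)) := by
  ext x
  rcases x with x | x <;> by_cases hx : x = a <;> by_cases hx' : x = b <;>
    simp_all [perturbLetter, killLetter]

/-- The letters `inl a` are the variables of `w` and the `inr a` auxiliary ones: evaluated at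
`inr a ↦ g`, `cubeWord w L` is the iterated finite difference of `w` with step `g` in the
directions `a ∈ L`. -/
def cubeWord (w : FreeGroup α) : List α → FreeGroup (α ⊕ α)
  | [] => map Sum.inl w
  | a :: L => perturbLetter a (cubeWord w L) * (cubeWord w L)⁻¹

theorem killLetter_cubeWord (w : FreeGroup α) {a : α} {L : List α} (h : a ∈ L) :
    killLetter (.inr a) (cubeWord w L) = 1 := by
  induction L with
  | nil => simp at h
  | cons b L ih =>
    rw [cubeWord, _root_.map_mul, _root_.map_inv, ← MonoidHom.comp_apply]
    by_cases hab : b = a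
    · rw [hab, killLetter_comp_perturbLetter_self, mul_inv_cancel]
    · have ha : a ∈ L := (List.mem_cons.mp h).resolve_left (Ne.symm hab)
      rw [killLetter_comp_perturbLetter_of_ne hab, MonoidHom.comp_apply, ih ha]
      simp

theorem cubeWord_mem_lowerCentralSeries (w : FreeGroup α) {L : List α} (hL : L.Nodup) {k : ℕ}
    (hk : k < L.length) :
    cubeWord w L ∈ (⊤ : Subgroup (FreeGroup (α ⊕ α))).lowerCentralSeries k :=
  mem_lowerCentralSeries_of_killLetter_eq_one (S := L.toFinset.map .inr)
    (by simpa using fun a => killLetter_cubeWord w)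
    (by rwa [Finset.card_map, List.toFinset_card_of_nodup hL])

def perturb (z : α → X) (g : X) (b : Finset α) : α → X :=
  fun a => if a ∈ b then z a * g else z a

@[simp]
theorem perturb_empty (z : α → X) (g : X) : perturb z g ∅ = z := by
  ext a; simp [perturb]

theorem lift_comp_perturbLetter (x : α → X) (g : X) (a : α) :
    (lift (Sum.elim x fun _ => g)).comp (perturbLetter a) =
      lift (Sum.elim (Function.update x a (x a * g)) fun _ => g) := by
  ext y
  simp only [MonoidHom.comp_apply, perturbLetter, lift_apply_of]
  rcases y with y | y
  · by_cases h : y = a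
    · subst h
      simp only [Function.update_self, _root_.map_mul, lift_apply_of, Sum.elim_inl, Sum.elim_inr]
    · simp only [Function.update_of_ne (Sum.inl_injective.ne h), Function.update_of_ne h,
        lift_apply_of, Sum.elim_inl]
  · simp only [Function.update_of_ne Sum.inr_ne_inl, lift_apply_of, Sum.elim_inr]

theorem update_perturb {z : α → X} {g : X} {a : α} {b : Finset α} (ha : a ∉ b) :
    Function.update (perturb z g b) a (perturb z g b a * g) = perturb z g (insert a b) := by
  ext y
  by_cases h : y = a <;> simp [perturb, h, ha]

theorem lift_cubeWord_eq_one_iff {z : α → X} {g : X} {w : FreeGroup α} {S : Finset α}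
    (hw : ∀ b ⊆ S, b.Nonempty → lift (perturb z g b) w = 1) :
    lift (Sum.elim z fun _ => g) (cubeWord w S.toList) = 1 ↔ lift z w = 1 := by
  have key (L : List α) (hL : L.Nodup) (hLS : ∀ a ∈ L, a ∈ S) (b : Finset α) (hbS : b ⊆ S)
      (hbL : ∀ a ∈ L, a ∉ b) :
      lift (Sum.elim (perturb z g b) fun _ => g) (cubeWord w L) = 1 ↔
        b.Nonempty ∨ lift z w = 1 := by
    induction L generalizing b with
    | nil =>
      rw [cubeWord, lift_map_inl]
      rcases b.eq_empty_or_nonempty with rfl | hb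
      · simp
      · simp [hb, hw b hbS hb]
    | cons a L ih =>
      rw [List.nodup_cons] at hL
      have ha : a ∉ b := hbL a List.mem_cons_self
      have hins := ih hL.2 (fun a' h' => hLS a' (List.mem_cons_of_mem a h')) (insert a b)
        (Finset.insert_subset (hLS a List.mem_cons_self) hbS)
        (fun a' h' => by
          rw [Finset.mem_insert, not_or]
          exact ⟨fun h => hL.1 (h ▸ h'), hbL a' (List.mem_cons_of_mem a h')⟩)
      rw [cubeWord, _root_.map_mul, _root_.map_inv, ← MonoidHom.comp_apply,
        lift_comp_perturbLetter, update_perturb ha, hins.mpr (Or.inl (Finset.insert_nonempty a b)),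
        one_mul, inv_eq_one,
        ih hL.2 (fun a' h' => hLS a' (List.mem_cons_of_mem a h')) b hbS
          (fun a' h' => hbL a' (List.mem_cons_of_mem a h'))]
  simpa using key S.toList S.nodup_toList (fun a => S.mem_toList.mp) ∅
    (Finset.empty_subset S) (by simp)

theorem lift_eq_one_of_lift_perturb_eq_one [Group.IsNilpotent X] {z : α → X} {g : X}
    {w : FreeGroup α} {S : Finset α} (hS : Group.nilpotencyClass X < S.card)
    (hw : ∀ b ⊆ S, b.Nonempty → lift (perturb z g b) w = 1) : lift z w = 1 := by
  rw [← lift_cubeWord_eq_one_iff hw, ← Subgroup.mem_bot,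
    ← Subgroup.lowerCentralSeries_nilpotencyClass]
  have := Subgroup.mem_map_of_mem (lift (Sum.elim z fun _ => g))
    (cubeWord_mem_lowerCentralSeries w S.nodup_toList (by simpa using hS))
  rw [Subgroup.map_lowerCentralSeries] at this
  exact Subgroup.lowerCentralSeries_mono _ le_top this

theorem closure_range_lt_closure_range_perturb {z : α → X} {g : X}
    (hg : g ∉ Subgroup.closure (Set.range z)) {a₀ : α} {b : Finset α} (ha₀ : a₀ ∉ b)
    (hb : ∀ a ∈ b, z a = z a₀) (hne : b.Nonempty) :
    Subgroup.closure (Set.range z) < Subgroup.closure (Set.range (perturb z g b)) := by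
  set K := Subgroup.closure (Set.range (perturb z g b))
  have hmem (a : α) : perturb z g b a ∈ K := Subgroup.subset_closure ⟨a, rfl⟩
  obtain ⟨a, ha⟩ := hne
  have hgK : g ∈ K := by
    have : g = (perturb z g b a₀)⁻¹ * perturb z g b a := by simp [perturb, ha₀, ha, hb a ha]
    exact this ▸ mul_mem (inv_mem (hmem a₀)) (hmem a)
  have hzK (a' : α) : z a' ∈ K := by
    by_cases h : a' ∈ b
    · have : z a' = perturb z g b a' * g⁻¹ := by simp [perturb, h]
      exact this ▸ mul_mem (hmem a') (inv_mem hgK)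
    · simpa [perturb, h] using hmem a'
  exact SetLike.lt_iff_le_and_exists.mpr
    ⟨Subgroup.closure_le _ |>.mpr (Set.range_subset_iff.mpr hzK), g, hgK, hg⟩

end LetterDeletion

theorem lift_eq_one_of_forall_closure_range_eq_top [Finite X] [Group.IsNilpotent X] [Finite α]
    (hα : (Group.nilpotencyClass X + 1) * Nat.card X < Nat.card α) {w : FreeGroup α}
    (hw : ∀ x : α → X, Subgroup.closure (Set.range x) = ⊤ → lift x w = 1) (z : α → X) :
    lift z w = 1 := by
  classical
  suffices ∀ H : Subgroup X, ∀ z : α → X, Subgroup.closure (Set.range z) = H → lift z w = 1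
    from this _ z rfl
  intro H
  induction H using WellFoundedGT.induction with
  | ind H ih =>
  rintro z rfl
  by_cases htop : Subgroup.closure (Set.range z) = ⊤
  · exact hw z htop
  obtain ⟨g, hg⟩ : ∃ g, g ∉ Subgroup.closure (Set.range z) := by
    simpa [Subgroup.eq_top_iff'] using htop
  obtain ⟨a₀, S, ha₀, hS, hcard⟩ :=
    Finite.exists_finset_eq_on_of_mul_lt_card z (n := Group.nilpotencyClass X + 1)
      (by rwa [mul_comm])
  refine lift_eq_one_of_lift_perturb_eq_one (S := S) (g := g) hcard fun b hbS hb => ?_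
  exact ih _ (closure_range_lt_closure_range_perturb hg (fun h => ha₀ (hbS h))
    (fun a ha => hS a (hbS ha)) hb) _ rfl

end FreeGroup

theorem quotient_of_subgroup_of_power_is_image_of_subdirect_power_general
    (X : Type*) [Group X] [Finite X] (hX : Group.IsNilpotent X)
    (m : ℕ) (B : Subgroup (Fin m → X))
    (Y : Type*) [Group Y] (f : B →* Y) (hf : Function.Surjective f) :
    ∃ (n : ℕ), 0 < n ∧ ∃ D : Subgroup (Fin n → X),
      (∀ (i : Fin n) (a : X), ∃ d ∈ D, d i = a) ∧
      ∃ μ : D →* Y, Function.Surjective μ := by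
  classical
  let α := (Fin (Group.nilpotencyClass X + 1) × X) ⊕ B
  let I := {x : α → X // Subgroup.closure (Set.range x) = ⊤}
  have : Nonempty I := ⟨⟨Sum.elim Prod.snd 1, eq_top_iff.mpr fun a _ =>
    Subgroup.subset_closure ⟨.inl (0, a), rfl⟩⟩⟩
  let e := Finite.equivFin I
  let φ : FreeGroup α →* (Fin (Nat.card I) → X) :=
    MonoidHom.pi fun i => FreeGroup.lift (e.symm i).1
  have hlaw (v : FreeGroup α) (hv : v ∈ φ.ker) (z : α → X) : FreeGroup.lift z v = 1 := by
    refine FreeGroup.lift_eq_one_of_forall_closure_range_eq_top ?_ (fun x hx => ?_) z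
    · simp [α, Nat.card_sum, Nat.card_prod, Nat.card_pos]
    · simpa [φ] using congrFun hv (e ⟨x, hx⟩)
  refine ⟨Nat.card I, Nat.card_pos, φ.range, fun i a => ?_,
    MonoidHom.exists_surjective_of_ker_le φ.rangeRestrict_surjective
      (ψ := f.comp (FreeGroup.lift (Sum.elim 1 id)))
      (hf.comp fun b => ⟨FreeGroup.of (.inr b), by simp⟩) fun v hv => ?_⟩
  · obtain ⟨v, hv⟩ : a ∈ (FreeGroup.lift (e.symm i).1).range := by
      rw [FreeGroup.range_lift_eq_closure, (e.symm i).2]; trivial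
    exact ⟨φ v, ⟨v, rfl⟩, hv⟩
  · rw [MonoidHom.ker_rangeRestrict] at hv
    simp [FreeGroup.lift_eq_one_of_forall_lift_eq_one (hlaw v hv)]

/-- Let `X` be a finite nilpotent group, `B ≤ X^m` a subgroup, and `Y` a surjective
homomorphic image of `B`. Then `Y` is a homomorphic image of a finite subdirect power of `X`. -/
theorem quotient_of_subgroup_of_power_is_image_of_subdirect_power
    (X : Type*) [Group X] [Finite X] (hX : Group.IsNilpotent X)
    (m : ℕ) (hm : 0 < m) (B : Subgroup (Fin m → X))
    (Y : Type*) [Group Y] (f : B →* Y) (hf : Function.Surjective f) :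
    ∃ (n : ℕ), 0 < n ∧ ∃ D : Subgroup (Fin n → X),
      (∀ (i : Fin n) (a : X), ∃ d ∈ D, d i = a) ∧
      ∃ μ : D →* Y, Function.Surjective μ :=
  quotient_of_subgroup_of_power_is_image_of_subdirect_power_general X hX m B Y f hf
end

section
/- Let A be an abelian group (not necessarily finite) and let B be a subgroup of A. Then B is a retract of a finite subdirect power of A: there exist a positive integer n, a subgroup D of A^n such that every coordinate projection D → A is surjective, a surjective group homomorphism μ : D → B, and a group homomorphism ν : B → D with μ ∘ ν = id_B. -/
/-! In `A²` the subgroup `D = {(x₀, x₁) | x₁ / x₀ ∈ B}` contains the diagonal, so it is subdirect.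
Commutativity makes `(x₀, x₁) ↦ x₁ / x₀` a homomorphism; it maps `D` onto `B`, and `b ↦ (1, b)` is a
homomorphic section. -/

theorem MonoidHom.exists_retract_comap {G H : Type*} [Group G] [Group H] (f : G →* H)
    (s : H →* G) (hs : ∀ h, f (s h) = h) (B : Subgroup H) :
    ∃ (μ : B.comap f →* B) (ν : B →* B.comap f),
      Function.Surjective μ ∧ ∀ b : B, μ (ν b) = b := by
  let ν : B →* B.comap f :=
    (s.comp B.subtype).codRestrict (B.comap f) fun b => by simp [hs]
  have hν : ∀ b : B, f.subgroupComap B (ν b) = b := fun b => Subtype.ext (hs b)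
  exact ⟨f.subgroupComap B, ν, Function.LeftInverse.surjective hν, hν⟩

def divCoords (A : Type*) [CommGroup A] : (Fin 2 → A) →* A :=
  Pi.evalMonoidHom (fun _ => A) 1 / Pi.evalMonoidHom (fun _ => A) 0

theorem divCoords_const {A : Type*} [CommGroup A] (a : A) : divCoords A (fun _ => a) = 1 :=
  div_self' a

theorem divCoords_mulSingle_one {A : Type*} [CommGroup A] (a : A) :
    divCoords A (Pi.mulSingle 1 a) = a := by
  simp [divCoords]

/-- Let `A` be an abelian group (not necessarily finite) and `B` a subgroup of `A`. Then `B` is a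
retract of a finite subdirect power of `A`. -/
theorem subgroup_of_abelian_is_retract_of_finite_subdirect_power
    (A : Type*) [CommGroup A] (B : Subgroup A) :
    ∃ (n : ℕ), 0 < n ∧ ∃ D : Subgroup (Fin n → A),
      (∀ (i : Fin n) (a : A), ∃ d ∈ D, d i = a) ∧
      ∃ (μ : D →* B) (ν : B →* D),
        Function.Surjective μ ∧ ∀ b : B, μ (ν b) = b := by
  have hsubdirect : ∀ (i : Fin 2) (a : A), ∃ d ∈ B.comap (divCoords A), d i = a :=
    fun _ a => ⟨fun _ => a, by simp [divCoords_const, B.one_mem], rfl⟩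
  exact ⟨2, two_pos, B.comap (divCoords A), hsubdirect,
    (divCoords A).exists_retract_comap (MonoidHom.mulSingle (fun _ => A) 1)
      divCoords_mulSingle_one B⟩
end

section
/- Let M be a monoid, let A be an M-set, let B be a nonempty sub-M-set of A, and let θ be an equivalence relation on A that is M-invariant (if x θ y then (m·x) θ (m·y) for all m ∈ M) and satisfies: for every a ∈ A there exists b ∈ B with a θ b (i.e., the saturation of B by θ is all of A). Then B is a retract of a finite subdirect power of A: there exist a positive integer n, a sub-M-set D of A^n such that every coordinate projection D → A is surjective, a surjective M-equivariant map μ : D → B, and an M-equivariant map ν : B → D with μ ∘ ν = id_B. -/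
/-!
A triple with two equal coordinates has a well-defined majority value, and taking it commutes with
any map applied coordinatewise, in particular with the action of `M`. Hence the triples with two
equal coordinates whose majority value lies in `B` and is `θ`-related to every coordinate form a
sub-`M`-set `D` of `A³`, and the majority value is an equivariant retraction of `D` onto `B` with
section `b ↦ (b, b, b)`. `D` is subdirect because the saturation of `B` is `A`: if `a θ b` with
`b ∈ B`, the triple with `a` in position `i` and `b` elsewhere lies in `D`.
-/

open Function

section Majority

variable {α β : Type*} [DecidableEq α] [DecidableEq β]

def majority (d : Fin 3 → α) : α := if d 1 = d 2 then d 1 else d 0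

theorem majority_eq_of_eq {d : Fin 3 → α} {j k : Fin 3} (hjk : j ≠ k) (h : d j = d k) :
    majority d = d j := by
  unfold majority
  fin_cases j <;> fin_cases k <;> simp_all

theorem majority_const (a : α) : majority (fun _ : Fin 3 => a) = a := if_pos rfl

theorem majority_comp {d : Fin 3 → α} (hd : ¬ Injective d) (f : α → β) :
    majority (f ∘ d) = f (majority d) := by
  obtain ⟨j, k, hdjk, hjk⟩ : ∃ j k, d j = d k ∧ j ≠ k := by
    simpa [Injective] using hd
  rw [majority_eq_of_eq hjk (congrArg f hdjk), majority_eq_of_eq hjk hdjk, comp_apply]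

end Majority

namespace SubMulAction

variable {M A : Type*} [Monoid M] [MulAction M A] [DecidableEq A]

def majorityTriples (B : SubMulAction M A) (θ : A → A → Prop)
    (hinv : ∀ (m : M) (x y : A), θ x y → θ (m • x) (m • y)) :
    SubMulAction M (Fin 3 → A) where
  carrier := {d | ¬ Injective d ∧ majority d ∈ B ∧ ∀ k, θ (majority d) (d k)}
  smul_mem' m d := by
    rintro ⟨hd, hB, hθ⟩
    have hmaj : majority (m • d) = m • majority d := majority_comp hd (m • ·)
    exact ⟨fun h => hd (Injective.of_comp (f := (m • ·)) h), hmaj ▸ B.smul_mem m hB,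
      fun k => hmaj ▸ hinv m _ _ (hθ k)⟩

variable {B : SubMulAction M A} {θ : A → A → Prop}
  {hinv : ∀ (m : M) (x y : A), θ x y → θ (m • x) (m • y)}

theorem const_mem_majorityTriples {b : A} (hb : b ∈ B) (hθ : θ b b) :
    (fun _ => b) ∈ majorityTriples B θ hinv :=
  ⟨fun h => absurd (h rfl) (by decide : (0 : Fin 3) ≠ 1), (majority_const b).symm ▸ hb,
    fun _ => (majority_const b).symm ▸ hθ⟩

theorem exists_mem_majorityTriples_apply_eq (hequiv : Equivalence θ)
    (hsat : ∀ a : A, ∃ b ∈ B, θ a b) (i : Fin 3) (a : A) :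
    ∃ d ∈ majorityTriples B θ hinv, d i = a := by
  obtain ⟨b, hb, hab⟩ := hsat a
  obtain ⟨j, k, hji, hki, hjk⟩ : ∃ j k : Fin 3, j ≠ i ∧ k ≠ i ∧ j ≠ k := by
    fin_cases i <;> decide
  set d := update (fun _ => b) i a
  have hdi : d i = a := update_self i a (fun _ => b)
  have hd : ∀ l ≠ i, d l = b := fun l hl => update_of_ne hl a (fun _ => b)
  have hdjk : d j = d k := (hd j hji).trans (hd k hki).symm
  have hmaj : majority d = b := (majority_eq_of_eq hjk hdjk).trans (hd j hji)
  refine ⟨d, ⟨fun h => hjk (h hdjk), hmaj ▸ hb, fun l => hmaj ▸ ?_⟩, hdi⟩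
  by_cases hl : l = i
  · exact hl ▸ hdi ▸ hequiv.symm hab
  · exact hd l hl ▸ hequiv.refl b

variable (B θ hinv) in
def majorityRetraction : majorityTriples B θ hinv →[M] B where
  toFun d := ⟨majority d.1, d.2.2.1⟩
  map_smul' m d := Subtype.ext (majority_comp d.2.1 (m • ·))

variable (B hinv) in
def constMajorityTriples (hθ : ∀ b, θ b b) : B →[M] majorityTriples B θ hinv where
  toFun b := ⟨fun _ => b.1, const_mem_majorityTriples b.2 (hθ b)⟩
  map_smul' _ _ := rfl

variable (B hinv) in
theorem leftInverse_majorityRetraction_constMajorityTriples (hθ : ∀ b, θ b b) :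
    LeftInverse (majorityRetraction B θ hinv) (constMajorityTriples B hinv hθ) :=
  fun b => Subtype.ext (majority_const b.1)

end SubMulAction

theorem subMulAction_retract_of_saturation_general
    (M : Type*) [Monoid M] (A : Type*) [MulAction M A]
    (B : SubMulAction M A)
    (θ : A → A → Prop) (hequiv : Equivalence θ)
    (hinv : ∀ (m : M) (x y : A), θ x y → θ (m • x) (m • y))
    (hsat : ∀ a : A, ∃ b ∈ B, θ a b) :
    ∃ (n : ℕ), 0 < n ∧ ∃ D : SubMulAction M (Fin n → A),
      (∀ (i : Fin n) (a : A), ∃ d ∈ D, d i = a) ∧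
      ∃ (μ : D →[M] B) (ν : B →[M] D),
        Function.Surjective μ ∧ ∀ b : B, μ (ν b) = b := by
  classical
  have hret :=
    SubMulAction.leftInverse_majorityRetraction_constMajorityTriples B hinv hequiv.refl
  exact ⟨3, by norm_num, _, SubMulAction.exists_mem_majorityTriples_apply_eq hequiv hsat, _, _,
    hret.surjective, hret⟩

/-- Let `M` be a monoid, `A` an `M`-set, `B` a nonempty sub-`M`-set of `A`, and `θ` an
`M`-invariant equivalence relation on `A` whose saturation of `B` is all of `A` (every `a ∈ A`
is `θ`-related to some `b ∈ B`). Then `B` is a retract of a finite subdirect power of `A`. -/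
theorem subMulAction_retract_of_saturation
    (M : Type*) [Monoid M] (A : Type*) [MulAction M A]
    (B : SubMulAction M A) (hB : (B : Set A).Nonempty)
    (θ : A → A → Prop) (hequiv : Equivalence θ)
    (hinv : ∀ (m : M) (x y : A), θ x y → θ (m • x) (m • y))
    (hsat : ∀ a : A, ∃ b ∈ B, θ a b) :
    ∃ (n : ℕ), 0 < n ∧ ∃ D : SubMulAction M (Fin n → A),
      (∀ (i : Fin n) (a : A), ∃ d ∈ D, d i = a) ∧
      ∃ (μ : D →[M] B) (ν : B →[M] D),
        Function.Surjective μ ∧ ∀ b : B, μ (ν b) = b :=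
  subMulAction_retract_of_saturation_general M A B θ hequiv hinv hsat
end

section
/- Let M be a monoid and let F be a property of M-sets such that: (i) if A has property F and f : A → C is a surjective M-equivariant map onto an M-set C, then C has property F; (ii) if A₁, …, A_n all have property F and D is a sub-M-set of the product A₁ × ⋯ × A_n (coordinatewise action) such that every coordinate projection D → A_i is surjective, then D has property F. Then F is closed under nonempty sub-M-sets: if A has property F and B is a nonempty sub-M-set of A, then B has property F. -/
/-!
Let `sel : A³ → A` take the third coordinate when the first two agree and the first one
otherwise (`selectByAgreement`). The triples `x` at which `sel` commutes with the whole action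
and `sel x ∈ B` form a sub-`M`-set `D` of `A³`, and `sel` restricts to an equivariant
surjection `D → B` (the diagonal maps onto `B`). Given `b ∈ B`, the triples `(a, a, b)` and `(b, a, a)` lie in `D`, so `D` is a
subdirect product of three copies of `A`; hence `F D`, and then `F B`.
-/

open Function

namespace SubMulAction

variable {M X Y : Type*} [Monoid M] [MulAction M X] [MulAction M Y]

def equivariantPreimage (f : X → Y) (B : SubMulAction M Y) : SubMulAction M X where
  carrier := {x | (∀ m : M, f (m • x) = m • f x) ∧ f x ∈ B}
  smul_mem' c x := fun ⟨hf, hB⟩ =>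
    ⟨fun m => by rw [smul_smul, hf, hf, mul_smul], hf c ▸ B.smul_mem c hB⟩

def equivariantPreimageRestrict (f : X → Y) (B : SubMulAction M Y) :
    equivariantPreimage f B →[M] B where
  toFun x := ⟨f x, x.2.2⟩
  map_smul' m x := Subtype.ext (x.2.1 m)

theorem equivariantPreimageRestrict_surjective {f : X → Y} (B : SubMulAction M Y)
    (s : Y →[M] X) (hs : ∀ y, f (s y) = y) :
    Surjective (equivariantPreimageRestrict f B) := fun ⟨y, hy⟩ =>
  ⟨⟨s y, fun m => by rw [← map_smul, hs, hs], by rwa [hs]⟩, Subtype.ext (hs y)⟩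

end SubMulAction

def MulActionHom.diagonal (M A ι : Type*) [Monoid M] [MulAction M A] : A →[M] (ι → A) where
  toFun := Function.const ι
  map_smul' _ _ := rfl

section SelectByAgreement

variable {M A : Type*} [Monoid M] [MulAction M A] [DecidableEq A]

def selectByAgreement (x : Fin 3 → A) : A :=
  if x 0 = x 1 then x 2 else x 0

theorem selectByAgreement_const (a : A) : selectByAgreement (Function.const (Fin 3) a) = a := by
  simp [selectByAgreement]

theorem selectByAgreement_eq_right (a b : A) : selectByAgreement ![a, a, b] = b := by
  simp [selectByAgreement]

theorem selectByAgreement_eq_left (a b : A) : selectByAgreement ![b, a, a] = b := by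
  by_cases h : b = a <;> simp [selectByAgreement, h]

theorem exists_mem_equivariantPreimage_selectByAgreement {B : SubMulAction M A} {b : A}
    (hb : b ∈ B) (i : Fin 3) (a : A) :
    ∃ d ∈ SubMulAction.equivariantPreimage selectByAgreement B, d i = a := by
  have h₁ : ![a, a, b] ∈ SubMulAction.equivariantPreimage selectByAgreement B :=
    ⟨fun m => by simp only [Matrix.smul_cons, Matrix.smul_empty, selectByAgreement_eq_right],
      (selectByAgreement_eq_right a b).symm ▸ hb⟩
  have h₂ : ![b, a, a] ∈ SubMulAction.equivariantPreimage selectByAgreement B :=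
    ⟨fun m => by simp only [Matrix.smul_cons, Matrix.smul_empty, selectByAgreement_eq_left],
      (selectByAgreement_eq_left a b).symm ▸ hb⟩
  fin_cases i
  exacts [⟨_, h₁, rfl⟩, ⟨_, h₁, rfl⟩, ⟨_, h₂, rfl⟩]

end SelectByAgreement

/-- Every formation of `M`-sets (unary algebras) is a pseudovariety: a property `F` of `M`-sets
closed under surjective `M`-equivariant images and under finite subdirect products is closed
under nonempty sub-`M`-sets. -/
theorem formation_of_mSets_is_hereditary
    (M : Type v) [Monoid M]
    (F : (X : Type u) → [inst : MulAction M X] → Prop)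
    (hquot : ∀ (A C : Type u) [MulAction M A] [MulAction M C] (f : A →[M] C),
      Function.Surjective f → F A → F C)
    (hsub : ∀ (n : ℕ), 0 < n → ∀ (A : Fin n → Type u) [∀ i, MulAction M (A i)],
      (∀ i, F (A i)) → ∀ D : SubMulAction M (∀ i, A i),
        (∀ (i : Fin n) (a : A i), ∃ d ∈ D, d i = a) → F D)
    (A : Type u) [MulAction M A] (hAF : F A)
    (B : SubMulAction M A) (hB : (B : Set A).Nonempty) :
    F B := by
  classical
  obtain ⟨b, hb⟩ := hB
  let D := SubMulAction.equivariantPreimage selectByAgreement B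
  have hD : F D :=
    hsub 3 (by norm_num) (fun _ => A) (fun _ => hAF) D
      (exists_mem_equivariantPreimage_selectByAgreement hb)
  exact hquot D B _ (B.equivariantPreimageRestrict_surjective
    (MulActionHom.diagonal M A (Fin 3)) selectByAgreement_const) hD
end

section
/- Let A₅ denote the alternating group on 5 letters. Let n be a positive integer, let D be a subgroup of (A₅)^n such that every coordinate projection D → A₅ is surjective, and let μ : D → G be a surjective group homomorphism. Then G is isomorphic to (A₅)^k for some natural number k (where (A₅)^0 is the trivial group). -/
/-!
Write `S^(n+1) = S × S^n`. If `D ≤ S × S^n` projects onto the first factor, then `D` meets that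
factor in a normal subgroup of `S`, so either `D` projects isomorphically onto its image
`E ≤ S^n`, or `D = S × E`. In the second case a normal subgroup `K` of `S × E` either contains
`S`, or meets it trivially; then every `⁅(s, e), (t, 1)⁆ = (⁅s, t⁆, 1)` with `(s, e) ∈ K` is
trivial, so `s` is central, hence `s = 1` and `(S × E) ⧸ K ≅ S × E ⧸ (K ∩ E)`. Induction on `n`.
-/

open Function MonoidHom
open scoped commutatorElement

universe u

def Fin.consMulEquiv (S : Type*) [Group S] (n : ℕ) : S × (Fin n → S) ≃* (Fin (n + 1) → S) where
  toEquiv := Fin.consEquiv fun _ => S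
  map_mul' _ _ := by
    ext i
    cases i using Fin.cases <;> simp [Fin.consEquiv]

section

variable {S H G : Type*} [Group S] [Group H] [Group G]

theorem MonoidHom.ker_eq_bot_prod_of_ker_comp_inl_eq_bot (hS : Subgroup.center S = ⊥)
    (μ : S × H →* G) (hμ : (μ.comp (inl S H)).ker = ⊥) :
    μ.ker = (⊥ : Subgroup S).prod (μ.comp (inr S H)).ker := by
  ext ⟨s, h⟩
  have hs : μ (s, h) = 1 → s = 1 := by
    intro hsh
    rw [← Subgroup.mem_bot, ← hS, Subgroup.mem_center_iff]
    intro t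
    have hst : ⁅s, t⁆ ∈ (μ.comp (inl S H)).ker := by
      have : inl S H ⁅s, t⁆ = ⁅(s, h), (t, 1)⁆ := by ext <;> simp [commutatorElement_def]
      rw [mem_ker, comp_apply, this, map_commutatorElement, hsh, commutatorElement_one_left]
    rw [hμ, Subgroup.mem_bot, commutatorElement_eq_one_iff_mul_comm] at hst
    exact hst.symm
  simp only [Subgroup.mem_prod, Subgroup.mem_bot, mem_ker, comp_apply, inr_apply]
  constructor
  · intro hsh
    obtain rfl := hs hsh
    exact ⟨rfl, hsh⟩
  · rintro ⟨rfl, hh⟩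
    exact hh

theorem MonoidHom.surjective_comp_inr_or_nonempty_mulEquiv_prod_quotient [IsSimpleGroup S]
    (hS : Subgroup.center S = ⊥) (μ : S × H →* G) (hμ : Surjective μ) :
    Surjective (μ.comp (inr S H)) ∨
      ∃ (N : Subgroup H) (_ : N.Normal), Nonempty (G ≃* S × H ⧸ N) := by
  rcases (μ.comp (inl S H)).normal_ker.eq_bot_or_eq_top with hker | hker
  · right
    refine ⟨(μ.comp (inr S H)).ker, inferInstance, ⟨?_⟩⟩
    exact (QuotientGroup.quotientKerEquivOfSurjective μ hμ).symm.trans <|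
      (QuotientGroup.quotientMulEquivOfEq
        (μ.ker_eq_bot_prod_of_ker_comp_inl_eq_bot hS hker)).trans <|
      (QuotientGroup.prodMulEquiv _ _).trans <|
      QuotientGroup.quotientBot.prodCongr (MulEquiv.refl _)
  · left
    intro g
    obtain ⟨⟨s, h⟩, rfl⟩ := hμ g
    have hs : μ (s, 1) = 1 := by
      simpa using (hker ▸ Subgroup.mem_top s : s ∈ (μ.comp (inl S H)).ker)
    refine ⟨h, ?_⟩
    rw [comp_apply, inr_apply, ← one_mul (μ (1, h)), ← hs, ← map_mul, Prod.mk_mul_mk, mul_one,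
      one_mul]

theorem Subgroup.normal_comap_inl (D : Subgroup (S × H))
    (hD : ∀ s, ∃ d ∈ D, d.1 = s) : (D.comap (inl S H)).Normal where
  conj_mem s hs t := by
    obtain ⟨d, hd, rfl⟩ := hD t
    have : (inl S H) (d.1 * s * d.1⁻¹) = d * inl S H s * d⁻¹ := by
      ext <;> simp
    simpa [Subgroup.mem_comap, this] using D.mul_mem (D.mul_mem hd hs) (D.inv_mem hd)

theorem Subgroup.eq_top_prod_map_snd_or_injective_snd [IsSimpleGroup S] (D : Subgroup (S × H))
    (hD : ∀ s, ∃ d ∈ D, d.1 = s) :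
    D = (⊤ : Subgroup S).prod (D.map (snd S H)) ∨ Injective ((snd S H).subgroupMap D) := by
  rcases (D.normal_comap_inl hD).eq_bot_or_eq_top with hbot | htop
  · right
    rw [injective_iff_map_eq_one]
    rintro ⟨⟨s, h⟩, hd⟩ hsh
    obtain rfl : h = 1 := congrArg Subtype.val hsh
    have hs : s ∈ D.comap (inl S H) := hd
    rw [hbot, Subgroup.mem_bot] at hs
    subst hs
    rfl
  · left
    refine le_antisymm (fun d hd => ⟨trivial, d, hd, rfl⟩) ?_
    rintro ⟨s, h⟩ ⟨-, d, hd, rfl : d.2 = h⟩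
    have hs : s * d.1⁻¹ ∈ D.comap (inl S H) := htop ▸ trivial
    have : ((s, d.2) : S × H) = inl S H (s * d.1⁻¹) * d := by ext <;> simp
    rw [this]
    exact D.mul_mem hs hd

theorem Subgroup.surjective_or_nonempty_mulEquiv_prod_quotient [IsSimpleGroup S]
    (hS : Subgroup.center S = ⊥) (D : Subgroup (S × H)) (hD : ∀ s, ∃ d ∈ D, d.1 = s)
    (μ : D →* G) (hμ : Surjective μ) :
    (∃ ν : D.map (snd S H) →* G, Surjective ν) ∨
      ∃ (N : Subgroup (D.map (snd S H))) (_ : N.Normal),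
        Nonempty (G ≃* S × D.map (snd S H) ⧸ N) := by
  rcases D.eq_top_prod_map_snd_or_injective_snd hD with hprod | hinj
  · let e : S × D.map (snd S H) ≃* D :=
      (Subgroup.topEquiv.symm.prodCongr (MulEquiv.refl _)).trans <|
        (Subgroup.prodEquiv _ _).symm.trans (MulEquiv.subgroupCongr hprod.symm)
    exact ((μ.comp e.toMonoidHom).surjective_comp_inr_or_nonempty_mulEquiv_prod_quotient hS
      (hμ.comp e.surjective)).imp_left fun h => ⟨_, h⟩
  · let e := MulEquiv.ofBijective _ ⟨hinj, (snd S H).subgroupMap_surjective D⟩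
    exact Or.inl ⟨μ.comp e.symm.toMonoidHom, hμ.comp e.symm.surjective⟩

end

theorem exists_mulEquiv_pi_of_surjective_of_subdirect {S : Type u} [Group S] [IsSimpleGroup S]
    (hS : Subgroup.center S = ⊥) {n : ℕ} (D : Subgroup (Fin n → S))
    (hD : ∀ i a, ∃ d ∈ D, d i = a) {G : Type*} [Group G] (μ : D →* G) (hμ : Surjective μ) :
    ∃ k : ℕ, Nonempty (G ≃* (Fin k → S)) := by
  -- The induction produces quotients of subgroups of `S`-powers, so it runs in the universe of `S`.
  suffices key : ∀ (n : ℕ) (D : Subgroup (Fin n → S)), (∀ i a, ∃ d ∈ D, d i = a) →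
      ∀ (G : Type u) [Group G] (μ : D →* G), Surjective μ → ∃ k : ℕ, Nonempty (G ≃* (Fin k → S)) by
    obtain ⟨k, ⟨e⟩⟩ := key n D hD _ (QuotientGroup.mk' μ.ker) (QuotientGroup.mk'_surjective _)
    exact ⟨k, ⟨(QuotientGroup.quotientKerEquivOfSurjective μ hμ).symm.trans e⟩⟩
  intro n
  induction n with
  | zero =>
    intro D _ G _ μ hμ
    have : Subsingleton G := hμ.subsingleton
    have : Unique G := uniqueOfSubsingleton 1
    exact ⟨0, ⟨MulEquiv.ofUnique⟩⟩
  | succ n ih =>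
    intro D hD G _ μ hμ
    let e := (Fin.consMulEquiv S n).symm
    let D' := D.map e.toMonoidHom
    have hD' : ∀ s, ∃ d ∈ D', d.1 = s := fun s =>
      let ⟨d, hd, hds⟩ := hD 0 s
      ⟨e d, Subgroup.mem_map_of_mem _ hd, hds⟩
    have hE : ∀ i a, ∃ x ∈ D'.map (snd S _), x i = a := fun i a =>
      let ⟨d, hd, hda⟩ := hD i.succ a
      ⟨(e d).2, Subgroup.mem_map_of_mem _ (Subgroup.mem_map_of_mem _ hd), hda⟩
    rcases D'.surjective_or_nonempty_mulEquiv_prod_quotient hS hD'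
        (μ.comp (e.subgroupMap D).symm.toMonoidHom) (hμ.comp (MulEquiv.surjective _)) with
      ⟨ν, hν⟩ | ⟨N, _, ⟨f⟩⟩
    · exact ih _ hE G ν hν
    · obtain ⟨k, ⟨g⟩⟩ := ih _ hE _ (QuotientGroup.mk' N) (QuotientGroup.mk'_surjective N)
      exact ⟨k + 1, ⟨f.trans (((MulEquiv.refl S).prodCongr g).trans (Fin.consMulEquiv S k))⟩⟩

theorem image_of_subdirect_power_of_A5_is_power_of_A5_general
    (n : ℕ)
    (D : Subgroup (Fin n → alternatingGroup (Fin 5)))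
    (hD : ∀ (i : Fin n) (a : alternatingGroup (Fin 5)), ∃ d ∈ D, d i = a)
    (G : Type*) [Group G] (μ : D →* G) (hμ : Function.Surjective μ) :
    ∃ k : ℕ, Nonempty (G ≃* (Fin k → alternatingGroup (Fin 5))) :=
  have : IsSimpleGroup (alternatingGroup (Fin 5)) := alternatingGroup.isSimpleGroup (by simp)
  exists_mulEquiv_pi_of_surjective_of_subdirect (alternatingGroup.center_eq_bot (by simp)) D hD μ hμ

/-- Every homomorphic image of a finite subdirect power of the alternating group `A₅` is
isomorphic to a finite direct power of `A₅`. -/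
theorem image_of_subdirect_power_of_A5_is_power_of_A5
    (n : ℕ) (hn : 0 < n)
    (D : Subgroup (Fin n → alternatingGroup (Fin 5)))
    (hD : ∀ (i : Fin n) (a : alternatingGroup (Fin 5)), ∃ d ∈ D, d i = a)
    (G : Type*) [Group G] (μ : D →* G) (hμ : Function.Surjective μ) :
    ∃ k : ℕ, Nonempty (G ≃* (Fin k → alternatingGroup (Fin 5))) :=
  image_of_subdirect_power_of_A5_is_power_of_A5_general n D hD G μ hμ
end

section
/- Let 𝔸 = ⟨ZMod 6; +, s, c⟩ where + is addition modulo 6, s(0) = s(3) = 0, s(1) = s(2) = s(4) = s(5) = 3, and c = 3, and let 𝔹 be the subalgebra of 𝔸 with universe {0, 3}. Then 𝔹 is not a homomorphic image of any finite subdirect power of 𝔸. Precisely: there do not exist a positive integer n, an additive subgroup D of the functions Fin n → ZMod 6 that contains the constant function 3, is closed under coordinatewise application of s, and has all coordinate projections D → ZMod 6 surjective, and a map μ : D → ZMod 6 such that (i) μ(d + d') = μ(d) + μ(d') for all d, d' ∈ D, (ii) μ(d') = s(μ(d)) whenever d ∈ D and d' is the coordinatewise application of s to d, (iii) μ(constant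 3) = 3, and (iv) μ(d) ∈ {0, 3} for all d ∈ D. -/
/-!
The additive subgroup `S` of `𝔸ⁿ` generated by the elements `s(d)`, `d ∈ D`, lies in the kernel
of `μ`, since `μ (s d) = s (μ d)` and `s` vanishes on `{0, 3}`. On the other hand `S` is closed
under pointwise multiplication, because `s a * s b = s (a + b) + s (a + 2 b)`, and all its
entries lie in `{0, 3} = {x | 2 x = 0}`, where `x + y + x y` is the Boolean join. Subdirectness
gives for every coordinate `i` an element `s d ∈ S` with `(s d) i = 3`; joining these yields the
constant `3` in `S`, so `μ 3 = 0`, contradicting `μ 3 = 3`.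
-/

/-- The unary operation `s` of the algebra `𝔸 = ⟨ZMod 6; +, s, 3⟩`:
`s 0 = s 3 = 0` and `s x = 3` for `x ∈ {1, 2, 4, 5}`. -/
def sOp : ZMod 6 → ZMod 6 := fun x => if x = 0 ∨ x = 3 then 0 else 3

-- `s a = 3` exactly when `3 ∤ a`, and for `3 ∤ a, b` exactly one of `a ± b` is divisible by `3`.
lemma sOp_mul_sOp : ∀ a b : ZMod 6, sOp a * sOp b = sOp (a + b) + sOp (a + 2 * b) := by
  decide

lemma two_mul_sOp_eq_zero : ∀ a : ZMod 6, 2 * sOp a = 0 := by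
  decide

lemma sOp_eq_zero {a : ZMod 6} (ha : a = 0 ∨ a = 3) : sOp a = 0 := by
  rcases ha with rfl | rfl <;> decide

lemma add_add_mul_eq_three : ∀ a b : ZMod 6, 2 * a = 0 → 2 * b = 0 → a = 3 ∨ b = 3 →
    a + b + a * b = 3 := by
  decide

theorem AddSubgroup.mul_mem_closure_of_mul_mem {R : Type*} [NonUnitalNonAssocRing R] {T : Set R}
    (hT : ∀ x ∈ T, ∀ y ∈ T, x * y ∈ closure T) {x y : R} (hx : x ∈ closure T)
    (hy : y ∈ closure T) : x * y ∈ closure T := by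
  induction hx, hy using closure_induction₂ with
  | mem x y hx hy => exact hT x hx y hy
  | zero_left => simp
  | zero_right => simp
  | add_left _ _ _ _ _ _ h₁ h₂ => simpa [add_mul] using add_mem h₁ h₂
  | add_right _ _ _ _ _ _ h₁ h₂ => simpa [mul_add] using add_mem h₁ h₂
  | neg_left _ _ _ _ h => simpa [neg_mul] using neg_mem h
  | neg_right _ _ _ _ h => simpa [mul_neg] using neg_mem h

theorem AddSubgroup.map_eq_zero_of_mem_closure {M N : Type*} [AddGroup M] [AddGroup N]
    {D : AddSubgroup M} {μ : M → N} (hμ : ∀ d ∈ D, ∀ d' ∈ D, μ (d + d') = μ d + μ d')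
    {T : Set M} (hTD : T ⊆ D) (hT : ∀ t ∈ T, μ t = 0) {w : M} (hw : w ∈ closure T) :
    μ w = 0 := by
  let φ : D →+ N := AddMonoidHom.mk' (fun d => μ d) fun d d' => hμ d d.2 d' d'.2
  have hle : closure T ≤ φ.ker.map D.subtype :=
    closure_le _ |>.mpr fun t ht => ⟨⟨t, hTD ht⟩, hT t ht, rfl⟩
  obtain ⟨d, hd, rfl⟩ := hle hw
  exact hd

variable {ι : Type*}

def sSpan (D : AddSubgroup (ι → ZMod 6)) : NonUnitalSubring (ι → ZMod 6) :=
  { AddSubgroup.closure {w | ∃ d ∈ D, w = sOp ∘ d} with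
    mul_mem' := fun hx hy => AddSubgroup.mul_mem_closure_of_mul_mem (by
      rintro _ ⟨x, hx, rfl⟩ _ ⟨y, hy, rfl⟩
      have hxy : sOp ∘ x * sOp ∘ y = sOp ∘ (x + y) + sOp ∘ (x + 2 * y) :=
        funext fun i => sOp_mul_sOp (x i) (y i)
      rw [hxy]
      refine add_mem (AddSubgroup.subset_closure ⟨_, add_mem hx hy, rfl⟩)
        (AddSubgroup.subset_closure ⟨_, add_mem hx (add_mem hy hy), ?_⟩)
      rw [two_mul]) hx hy }

namespace sSpan

variable {D : AddSubgroup (ι → ZMod 6)}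

lemma sOp_comp_mem {d : ι → ZMod 6} (hd : d ∈ D) : sOp ∘ d ∈ sSpan D :=
  AddSubgroup.subset_closure ⟨d, hd, rfl⟩

lemma two_mul_eq_zero {w : ι → ZMod 6} (hw : w ∈ sSpan D) : 2 * w = 0 := by
  have hle : (sSpan D).toAddSubgroup ≤ (AddMonoidHom.mulLeft 2).ker :=
    AddSubgroup.closure_le _ |>.mpr <| by
      rintro _ ⟨d, -, rfl⟩
      exact funext fun i => two_mul_sOp_eq_zero (d i)
  exact hle hw

lemma map_eq_zero {μ : (ι → ZMod 6) → ZMod 6} (hs : ∀ d ∈ D, sOp ∘ d ∈ D)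
    (hμ : ∀ d ∈ D, ∀ d' ∈ D, μ (d + d') = μ d + μ d')
    (hμs : ∀ d ∈ D, μ (sOp ∘ d) = sOp (μ d)) (hμB : ∀ d ∈ D, μ d = 0 ∨ μ d = 3)
    {w : ι → ZMod 6} (hw : w ∈ sSpan D) : μ w = 0 := by
  refine AddSubgroup.map_eq_zero_of_mem_closure hμ ?_ ?_ hw
  · rintro _ ⟨d, hd, rfl⟩
    exact hs d hd
  · rintro _ ⟨d, hd, rfl⟩
    rw [hμs d hd, sOp_eq_zero (hμB d hd)]

lemma const_three_mem [Fintype ι] (hD : ∀ i, ∃ d ∈ D, d i = 1) : (fun _ => 3) ∈ sSpan D := by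
  classical
  suffices ∀ t : Finset ι, ∃ w ∈ sSpan D, ∀ i ∈ t, w i = 3 by
    obtain ⟨w, hw, hw3⟩ := this Finset.univ
    convert hw
    exact (hw3 _ (Finset.mem_univ _)).symm
  intro t
  induction t using Finset.induction_on with
  | empty => exact ⟨0, zero_mem _, by simp⟩
  | insert i t _ ih =>
    obtain ⟨w, hw, hwt⟩ := ih
    obtain ⟨d, hd, hdi⟩ := hD i
    refine ⟨w + sOp ∘ d + w * sOp ∘ d,
      add_mem (add_mem hw (sOp_comp_mem hd)) (mul_mem hw (sOp_comp_mem hd)), ?_⟩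
    intro j hj
    refine add_add_mul_eq_three _ _ (congrFun (two_mul_eq_zero hw) j)
      (congrFun (two_mul_eq_zero (sOp_comp_mem hd)) j) ?_
    rcases Finset.mem_insert.mp hj with rfl | hj
    · exact Or.inr (by rw [Function.comp_apply, hdi]; decide)
    · exact Or.inl (hwt j hj)

end sSpan

/-- The two-element subalgebra `𝔹 = ⟨{0, 3}; +, s, 3⟩` of `𝔸 = ⟨ZMod 6; +, s, 3⟩` is not a
homomorphic image of any finite subdirect power of `𝔸`. -/
theorem B_not_image_of_finite_subdirect_power_of_A :
    ¬ ∃ (n : ℕ), 0 < n ∧ ∃ (D : AddSubgroup (Fin n → ZMod 6))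
      (μ : (Fin n → ZMod 6) → ZMod 6),
        ((fun _ => (3 : ZMod 6)) ∈ D) ∧
        (∀ d ∈ D, (fun i => sOp (d i)) ∈ D) ∧
        (∀ (i : Fin n) (a : ZMod 6), ∃ d ∈ D, d i = a) ∧
        (∀ d ∈ D, ∀ d' ∈ D, μ (d + d') = μ d + μ d') ∧
        (∀ d ∈ D, μ (fun i => sOp (d i)) = sOp (μ d)) ∧
        (μ (fun _ => (3 : ZMod 6)) = 3) ∧
        (∀ d ∈ D, μ d = 0 ∨ μ d = 3) := by
  rintro ⟨n, -, D, μ, -, hs, hsurj, hμ, hμs, hμ3, hμB⟩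
  have h := sSpan.map_eq_zero hs hμ hμs hμB (sSpan.const_three_mem fun i => hsurj i 1)
  rw [hμ3] at h
  exact absurd h (by decide)
end

section
/- Let n be a positive integer and let D be an additive subgroup of the functions Fin n → ZMod 6 that contains the constant function 3, is closed under coordinatewise application of s, and has all coordinate projections D → ZMod 6 surjective. Let I ⊆ D be a subset that is closed under subtraction and contains 0 (an additive subgroup of D), such that for all d, d' ∈ D, if d − d' ∈ I then (s∘d) − (s∘d') ∈ I (here s∘d denotes coordinatewise application of s). Suppose I has index at most 2 in D, i.e., there exists d₀ ∈ D such that every d ∈ D satisfies d ∈ I or d − d₀ ∈ I. Then the constant function 3 belongs to I. -/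
open Finset

theorem odd_card_of_add_self_eq_zero {H : Type*} [AddGroup H] [Finite H]
    (hH : ∀ x : H, x + x = 0 → x = 0) : Odd (Nat.card H) := by
  by_contra h
  rw [Nat.not_odd_iff_even, even_iff_two_dvd] at h
  obtain ⟨x, hx⟩ := exists_prime_addOrderOf_dvd_card' 2 h
  have hx0 : x = 0 := hH x (by rw [← two_nsmul, ← hx, addOrderOf_nsmul_eq_zero])
  simp [hx0] at hx

theorem two_mul_card_filter_neg_lt {H : Type*} [InvolutiveNeg H] [LinearOrder H] [Fintype H]
    (p : H → Prop) [DecidablePred p] (hp : ∀ x, p (-x) ↔ p x) (hfix : ∀ x, p x → -x ≠ x) :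
    2 * #{x | -x < x ∧ p x} = #{x | p x} := by
  have hneg : #{x | x < -x ∧ p x} = #{x | -x < x ∧ p x} :=
    card_nbij' (-·) (-·) (fun x hx => by simp_all) (fun x hx => by simp_all)
      (fun x _ => neg_neg x) (fun x _ => neg_neg x)
  rw [two_mul]
  nth_rw 2 [← hneg]
  rw [← card_filter_add_card_filter_not (s := {x | p x}) (fun x => -x < x), filter_filter,
    filter_filter]
  congr 2 <;> ext x <;> simp only [mem_filter, mem_univ, true_and, not_lt]
  · exact and_comm
  · exact ⟨fun ⟨hx, h⟩ => ⟨h, hx.le⟩, fun ⟨h, hx⟩ => ⟨hx.lt_of_ne (hfix x h).symm, h⟩⟩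

namespace AddMonoidHom

variable {H M : Type*} [AddGroup H] [Fintype H] [AddGroup M] [DecidableEq M]

theorem card_filter_ne_zero (f : H →+ M) :
    #{x | f x ≠ 0} = (Nat.card f.range - 1) * Nat.card f.ker := by
  have hker : #{x | f x = 0} = Nat.card f.ker := by
    rw [← Fintype.card_subtype, ← Nat.card_eq_fintype_card]; rfl
  have hcard : Nat.card f.ker * Nat.card f.range = Fintype.card H := by
    rw [← AddSubgroup.index_ker, AddSubgroup.card_mul_index, Nat.card_eq_fintype_card]
  rw [Nat.sub_one_mul, mul_comm, hcard, ← hker, ← card_univ,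
    ← card_filter_add_card_filter_not (s := univ) (fun x => f x = 0)]
  simp

theorem odd_card_filter_neg_lt_ne_zero [LinearOrder H] (hH : ∀ x : H, x + x = 0 → x = 0)
    (f : H →+ M) (hf : Nat.card f.range = 3) : Odd #{x | -x < x ∧ f x ≠ 0} := by
  have hfix : ∀ x, f x ≠ 0 → -x ≠ x := by
    intro x hx hneg
    have hx2 : x + x = 0 := by rw [← neg_add_cancel x, hneg]
    exact hx (by rw [hH x hx2, map_zero])
  have h2 : 2 * #{x | -x < x ∧ f x ≠ 0} = 2 * Nat.card f.ker := by
    rw [two_mul_card_filter_neg_lt (fun x => f x ≠ 0) (by simp) hfix, f.card_filter_ne_zero, hf]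
  rw [Nat.eq_of_mul_eq_mul_left two_pos h2]
  exact odd_card_of_add_self_eq_zero fun x hx => Subtype.ext (hH x (congrArg Subtype.val hx))

theorem card_range_eq_three {G : Type*} [AddGroup G] (f : G →+ ZMod 6)
    (h3 : ∀ x : G, 3 • x = 0) (hf : f ≠ 0) : Nat.card f.range = 3 := by
  have hdvd : Nat.card f.range ∣ 6 := by
    simpa using AddSubgroup.card_addSubgroup_dvd_card f.range
  have hodd : Odd (Nat.card f.range) := by
    have key : ∀ y : ZMod 6, 3 • y = 0 → y + y = 0 → y = 0 := by decide
    refine odd_card_of_add_self_eq_zero fun ⟨y, x, hx⟩ hy => Subtype.ext (key y ?_ ?_)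
    · rw [← hx, ← map_nsmul, h3, map_zero]
    · exact congrArg Subtype.val hy
  have hne : Nat.card f.range ≠ 1 := by
    rwa [Ne, AddSubgroup.card_eq_one, range_eq_bot_iff]
  have := Nat.le_of_dvd (by norm_num) hdvd
  interval_cases Nat.card f.range <;> first | rfl | contradiction

end AddMonoidHom

theorem sOp_eq_ite_of_three_nsmul_eq_zero {x : ZMod 6} (hx : 3 • x = 0) :
    sOp x = if x = 0 then 0 else 3 := by
  revert x; decide

theorem nsmul_three_eq_three_of_odd {k : ℕ} (hk : Odd k) : k • (3 : ZMod 6) = 3 := by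
  obtain ⟨m, rfl⟩ := hk
  rw [add_nsmul, one_nsmul, mul_comm, mul_nsmul', show 2 • (3 : ZMod 6) = 0 from rfl, nsmul_zero,
    zero_add]

theorem const_three_mem_closure_image_sOp {n : ℕ} (D : AddSubgroup (Fin n → ZMod 6))
    (hD : ∀ i, ∃ d ∈ D, d i = 1) :
    (fun _ => 3) ∈ AddSubgroup.closure ((fun d i => sOp (d i)) '' (D : Set (Fin n → ZMod 6))) := by
  classical
  let T : AddSubgroup (Fin n → ZMod 6) := D ⊓ (nsmulAddMonoidHom 3).ker
  -- any linear order will do: `-t < t` selects one element of each pair `{t, -t}`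
  let : LinearOrder T := LinearOrder.lift' _ (Fintype.equivFin T).injective
  have hT3 : ∀ t : T, 3 • t = 0 := fun t => Subtype.ext (AddSubgroup.mem_inf.1 t.2).2
  have hT2 : ∀ t : T, t + t = 0 → t = 0 := fun t ht =>
    calc t = 3 • t - (t + t) := by abel
      _ = 0 := by rw [hT3, ht, sub_zero]
  have hodd : ∀ i, Odd #{t : T | -t < t ∧ (t : Fin n → ZMod 6) i ≠ 0} := by
    intro i
    let f : T →+ ZMod 6 := (Pi.evalAddMonoidHom _ i).comp T.subtype
    refine f.odd_card_filter_neg_lt_ne_zero hT2 (f.card_range_eq_three hT3 fun hf => ?_)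
    obtain ⟨d, hd, hdi⟩ := hD i
    have h2d : 2 • d ∈ T := by
      refine AddSubgroup.mem_inf.2 ⟨D.nsmul_mem hd 2, ?_⟩
      rw [AddMonoidHom.mem_ker, nsmulAddMonoidHom_apply, smul_smul]
      funext j
      exact (by decide : ∀ x : ZMod 6, 6 • x = 0) (d j)
    have h2 := DFunLike.congr_fun hf ⟨2 • d, h2d⟩
    simp only [f, AddMonoidHom.coe_comp, Function.comp_apply, AddSubgroup.coe_subtype,
      Pi.evalAddMonoidHom_apply, Pi.smul_apply, hdi, AddMonoidHom.zero_apply] at h2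
    exact absurd h2 (by decide)
  have hsum : ∑ t ∈ {t : T | -t < t}, (fun i => sOp ((t : Fin n → ZMod 6) i)) = fun _ => 3 := by
    funext i
    rw [Finset.sum_apply, sum_congr rfl fun t _ =>
      sOp_eq_ite_of_three_nsmul_eq_zero (congrFun (congrArg Subtype.val (hT3 t)) i),
      sum_ite, sum_const_zero, zero_add, sum_const, filter_filter]
    exact nsmul_three_eq_three_of_odd (hodd i)
  rw [← hsum]
  exact AddSubgroup.sum_mem _ fun t _ =>
    AddSubgroup.subset_closure ⟨t, (AddSubgroup.mem_inf.1 t.2).1, rfl⟩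

theorem const_three_mem_ideal_of_index_le_two_general
    (n : ℕ) (D : AddSubgroup (Fin n → ZMod 6))
    (hc : (fun _ => (3 : ZMod 6)) ∈ D)
    (hsubdir : ∀ (i : Fin n) (a : ZMod 6), ∃ d ∈ D, d i = a)
    (I : Set (Fin n → ZMod 6))
    (h0 : (0 : Fin n → ZMod 6) ∈ I)
    (hsubtr : ∀ a ∈ I, ∀ b ∈ I, a - b ∈ I)
    (hideal : ∀ d ∈ D, ∀ d' ∈ D, d - d' ∈ I →
      (fun i => sOp (d i)) - (fun i => sOp (d' i)) ∈ I)
    (hindex : ∃ d₀ ∈ D, ∀ d ∈ D, d ∈ I ∨ d - d₀ ∈ I) :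
    (fun _ => (3 : ZMod 6)) ∈ I := by
  obtain ⟨d₀, -, hd₀⟩ := hindex
  by_contra hcI
  have hc₀ : (fun _ => (3 : ZMod 6)) - d₀ ∈ I := (hd₀ _ hc).resolve_left hcI
  let J : AddSubgroup (Fin n → ZMod 6) :=
    .ofSub I ⟨0, h0⟩ fun a ha b hb => sub_eq_add_neg a b ▸ hsubtr a ha b hb
  have hsJ : ∀ d ∈ D, (fun i => sOp (d i)) ∈ J := by
    intro d hd
    rcases hd₀ d hd with hdI | hdI
    · have h := hideal d hd 0 D.zero_mem (by rwa [sub_zero])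
      rwa [show (fun i => sOp ((0 : Fin n → ZMod 6) i)) = 0 from rfl, sub_zero] at h
    · have hd3 := hsubtr _ hdI _ hc₀
      rw [sub_sub_sub_cancel_right] at hd3
      have h := hideal d hd _ hc hd3
      rwa [show (fun _ => sOp 3) = (0 : Fin n → ZMod 6) from rfl, sub_zero] at h
  exact hcI <| (AddSubgroup.closure_le J).2 (Set.image_subset_iff.2 hsJ)
    (const_three_mem_closure_image_sOp D fun i => hsubdir i 1)

/-- If `D` is a finite subdirect power of the algebra `𝔸 = ⟨ZMod 6; +, s, 3⟩` and `I` is an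
ideal of `D` of index at most 2, then the constant `c = 3` of `D` belongs to `I`. -/
theorem const_three_mem_ideal_of_index_le_two
    (n : ℕ) (hn : 0 < n) (D : AddSubgroup (Fin n → ZMod 6))
    (hc : (fun _ => (3 : ZMod 6)) ∈ D)
    (hs : ∀ d ∈ D, (fun i => sOp (d i)) ∈ D)
    (hsubdir : ∀ (i : Fin n) (a : ZMod 6), ∃ d ∈ D, d i = a)
    (I : Set (Fin n → ZMod 6)) (hID : I ⊆ (D : Set (Fin n → ZMod 6)))
    (h0 : (0 : Fin n → ZMod 6) ∈ I)
    (hsubtr : ∀ a ∈ I, ∀ b ∈ I, a - b ∈ I)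
    (hideal : ∀ d ∈ D, ∀ d' ∈ D, d - d' ∈ I →
      (fun i => sOp (d i)) - (fun i => sOp (d' i)) ∈ I)
    (hindex : ∃ d₀ ∈ D, ∀ d ∈ D, d ∈ I ∨ d - d₀ ∈ I) :
    (fun _ => (3 : ZMod 6)) ∈ I :=
  const_three_mem_ideal_of_index_le_two_general n D hc hsubdir I h0 hsubtr hideal hindex
end

section
/- Let θ = {(x, y) ∈ ZMod 6 × ZMod 6 | x − y ∈ {0, 3}}. Then: (i) θ is closed under coordinatewise addition, contains (3, 3), and is closed under the map (x, y) ↦ (s(x), s(y)); moreover (s(x), s(y)) lies on the diagonal (s(x) = s(y)) for every (x, y) ∈ θ; and (ii) the equivalence relation Δ on θ with exactly two classes, the diagonal {(x, x)} and the off-diagonal {(x, y) ∈ θ | x ≠ y}, is a congruence of the algebra ⟨θ; +, s×s, (3,3)⟩: if p, q ∈ θ lie in the same Δ-class and p', q' ∈ θ lie in the same Δ-class, then p + p' and q + q' lie in the same Δ-class, and (s×s)(p) and (s×s)(q) lie in the same Δ-class. -/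
/-- The congruence `θ = {(x, y) | x - y ∈ {0, 3}}` of `𝔸 = ⟨ZMod 6; +, s, 3⟩`. -/
def thetaRel : Set (ZMod 6 × ZMod 6) := {p | p.1 - p.2 = 0 ∨ p.1 - p.2 = 3}

section OrderTwo

variable {G : Type*} [AddGroup G] {a b c : G}

theorem add_eq_zero_or_eq_of_eq_zero_or_eq (hc : c + c = 0) (ha : a = 0 ∨ a = c)
    (hb : b = 0 ∨ b = c) : a + b = 0 ∨ a + b = c := by
  rcases ha with rfl | rfl <;> rcases hb with rfl | rfl <;> simp [hc]

theorem add_eq_zero_iff_of_eq_zero_or_eq (hc : c + c = 0) (hc₀ : c ≠ 0) (ha : a = 0 ∨ a = c)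
    (hb : b = 0 ∨ b = c) : a + b = 0 ↔ (a = 0 ↔ b = 0) := by
  rcases ha with rfl | rfl <;> rcases hb with rfl | rfl <;> simp [hc, hc₀]

end OrderTwo

theorem fst_sub_snd_add {G : Type*} [AddCommGroup G] (p q : G × G) :
    (p + q).1 - (p + q).2 = (p.1 - p.2) + (q.1 - q.2) :=
  add_sub_add_comm _ _ _ _

theorem sOp_add_three (x : ZMod 6) : sOp (x + 3) = sOp x := by
  revert x
  decide

theorem add_mem_thetaRel {p q : ZMod 6 × ZMod 6} (hp : p ∈ thetaRel) (hq : q ∈ thetaRel) :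
    p + q ∈ thetaRel := by
  change _ ∨ _
  rw [fst_sub_snd_add]
  exact add_eq_zero_or_eq_of_eq_zero_or_eq (by decide) hp hq

theorem mem_thetaRel_of_fst_eq_snd {p : ZMod 6 × ZMod 6} (h : p.1 = p.2) : p ∈ thetaRel :=
  Or.inl (sub_eq_zero.mpr h)

theorem sOp_fst_eq_sOp_snd {p : ZMod 6 × ZMod 6} (hp : p ∈ thetaRel) : sOp p.1 = sOp p.2 := by
  rcases hp with h | h
  · rw [sub_eq_zero.mp h]
  · rw [eq_add_of_sub_eq' h, sOp_add_three]

theorem add_fst_eq_snd_iff {p q : ZMod 6 × ZMod 6} (hp : p ∈ thetaRel) (hq : q ∈ thetaRel) :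
    (p + q).1 = (p + q).2 ↔ (p.1 = p.2 ↔ q.1 = q.2) := by
  simp only [← sub_eq_zero (a := (p + q).1), ← sub_eq_zero (a := p.1), ← sub_eq_zero (a := q.1),
    fst_sub_snd_add]
  exact add_eq_zero_iff_of_eq_zero_or_eq (by decide) (by decide) hp hq

/-- (i) `θ`, viewed as a subset of `(ZMod 6)²`, is a subalgebra of `𝔸²` on which `s × s` takes
values in the diagonal; (ii) the two-class equivalence relation `Δ` on `θ` (diagonal vs.
off-diagonal) is a congruence of the algebra `⟨θ; +, s × s, (3, 3)⟩`. -/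
theorem theta_subalgebra_and_delta_congruence :
    -- (i) θ is a subalgebra of 𝔸², and s × s maps θ into the diagonal
    (∀ p ∈ thetaRel, ∀ q ∈ thetaRel, p + q ∈ thetaRel) ∧
    ((3, 3) : ZMod 6 × ZMod 6) ∈ thetaRel ∧
    (∀ p ∈ thetaRel, ((sOp p.1, sOp p.2) : ZMod 6 × ZMod 6) ∈ thetaRel ∧ sOp p.1 = sOp p.2) ∧
    -- (ii) Δ (same class iff "on the diagonal" agrees) is a congruence of ⟨θ; +, s × s, (3,3)⟩
    (∀ p ∈ thetaRel, ∀ q ∈ thetaRel, ∀ p' ∈ thetaRel, ∀ q' ∈ thetaRel,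
      (p.1 = p.2 ↔ q.1 = q.2) → (p'.1 = p'.2 ↔ q'.1 = q'.2) →
        ((p + p').1 = (p + p').2 ↔ (q + q').1 = (q + q').2)) ∧
    (∀ p ∈ thetaRel, ∀ q ∈ thetaRel,
      (p.1 = p.2 ↔ q.1 = q.2) → (sOp p.1 = sOp p.2 ↔ sOp q.1 = sOp q.2)) := by
  refine ⟨fun p hp q hq => add_mem_thetaRel hp hq,
    mem_thetaRel_of_fst_eq_snd rfl,
    fun p hp => ⟨mem_thetaRel_of_fst_eq_snd (sOp_fst_eq_sOp_snd hp), sOp_fst_eq_sOp_snd hp⟩,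
    ?_,
    fun p hp q hq _ => iff_of_true (sOp_fst_eq_sOp_snd hp) (sOp_fst_eq_sOp_snd hq)⟩
  intro p hp q hq p' hp' q' hq' hpq hpq'
  rw [add_fst_eq_snd_iff hp hp', add_fst_eq_snd_iff hq hq', hpq, hpq']
end
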